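/- arXiv:1110.1550 — 13 statements merged into one kernel-verified Lean document; each statement's English description precedes it below -/
import Mathlib

section
/- Let V be a real topological vector space and E a subset of its topological dual V′. If the support functional s_E(x) := sup_{α∈E} (−α(x)) is bounded above on some nonempty open subset of V, then E contains no nontrivial affine line: whenever α₀, β ∈ V′ satisfy α₀ + t·β ∈ E for every t ∈ ℝ, one has β = 0. -/
/-! A nonzero functional `β` cannot vanish on the nonempty open set `U`: its kernel is a proper
subspace, and proper subspaces of a topological vector space have empty interior. At a point
`x ∈ U` with `β x ≠ 0` the values `-(α₀ + t • β) x = -α₀ x - t β x` are unbounded above as `t`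
ranges over `ℝ`, contradicting the bound on `U`. -/

open Filter Topology

theorem LinearMap.exists_mem_apply_ne_zero_of_isOpen {R M N : Type*} [Ring R]
    [TopologicalSpace R] [AddCommGroup M] [Module R M] [TopologicalSpace M]
    [IsTopologicalAddGroup M] [ContinuousSMul R M] [NeBot (𝓝[{r : R | IsUnit r}] 0)]
    [AddCommGroup N] [Module R N] {f : M →ₗ[R] N} (hf : f ≠ 0)
    {U : Set M} (hU : IsOpen U) (hUne : U.Nonempty) : ∃ x ∈ U, f x ≠ 0 := by
  by_contra! hzero
  have hker : LinearMap.ker f = ⊤ :=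
    (LinearMap.ker f).eq_top_of_nonempty_interior' (hUne.mono (interior_maximal hzero hU))
  exact hf (LinearMap.ker_eq_top.mp hker)

theorem eq_zero_of_forall_add_mul_le {𝕜 : Type*} [Field 𝕜] [LinearOrder 𝕜]
    [IsStrictOrderedRing 𝕜] {a b C : 𝕜} (h : ∀ t : 𝕜, a + t * b ≤ C) : b = 0 := by
  by_contra hb
  have := h ((C - a + 1) / b)
  rw [div_mul_cancel₀ _ hb] at this
  linarith

/-- If the support functional `s_E(x) = sup_{α ∈ E} (-α x)` of a set `E`
of continuous linear functionals on a real topological vector space `V` is bounded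
above on some nonempty open subset of `V`, then `E` contains no nontrivial affine line. -/
theorem semiEquicontinuous_no_affine_line
    {V : Type*} [AddCommGroup V] [Module ℝ V] [TopologicalSpace V]
    [IsTopologicalAddGroup V] [ContinuousSMul ℝ V]
    (E : Set (V →L[ℝ] ℝ))
    (hE : ∃ U : Set V, IsOpen U ∧ U.Nonempty ∧ ∃ C : ℝ, ∀ x ∈ U, ∀ α ∈ E, -α x ≤ C)
    (α₀ β : V →L[ℝ] ℝ) (hline : ∀ t : ℝ, α₀ + t • β ∈ E) :
    β = 0 := by
  by_contra hβ
  obtain ⟨U, hU, hUne, C, hC⟩ := hE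
  have hβ' : (β : V →ₗ[ℝ] ℝ) ≠ 0 := fun h ↦ hβ (ContinuousLinearMap.coe_injective h)
  obtain ⟨x, hxU, hβx⟩ := LinearMap.exists_mem_apply_ne_zero_of_isOpen hβ' hU hUne
  have hbound : ∀ t : ℝ, -α₀ x + t * -β x ≤ C := fun t ↦ by
    have := hC x hxU _ (hline t)
    simp only [add_apply, smul_apply, smul_eq_mul] at this
    linarith
  exact hβx (neg_eq_zero.mp (eq_zero_of_forall_add_mul_le hbound))
end

section
/- Let g be a real topological Lie algebra with topological dual g′, let E ⊆ g′ be a semi-equicontinuous subset, and let x ∈ g satisfy (ad x)² = 0. Assume that for every λ ∈ E and every t ∈ ℝ the functional λ ∘ (id + t·ad x) again belongs to E. Then every λ ∈ E vanishes on [x,g], i.e. λ([x,y]) = 0 for all λ ∈ E and y ∈ g. -/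
/-!
At a point `u` of the open set `U` the functionals in `E` are bounded below, while the
invariance puts `λ ∘ (id + t • ad x) ∈ E`, whose value at `u` is `λ u + t λ⁅x, u⁆`; hence
`λ ∘ ad x` vanishes on `U`, and a linear functional vanishing on a nonempty open set is zero.
-/

theorem eq_zero_of_bddBelow_range_add_mul {a b : ℝ}
    (h : BddBelow (Set.range fun t : ℝ => a + t * b)) : b = 0 := by
  obtain ⟨c, hc⟩ := h
  by_contra hb
  have hc' : c ≤ a + (c - a - 1) / b * b := hc ⟨_, rfl⟩
  rw [div_mul_cancel₀ _ hb] at hc'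
  linarith

theorem LinearMap.apply_eq_zero_of_bddBelow_line {V : Type*} [AddCommGroup V] [Module ℝ V]
    (f : V →ₗ[ℝ] ℝ) (v w : V) (h : BddBelow (Set.range fun t : ℝ => f (v + t • w))) : f w = 0 :=
  eq_zero_of_bddBelow_range_add_mul (a := f v) <| by
    simpa only [map_add, map_smul, smul_eq_mul] using h

theorem LinearMap.eq_zero_of_forall_mem_isOpen {R M N : Type*} [Ring R] [TopologicalSpace R]
    [Filter.NeBot (nhdsWithin (0 : R) {r : R | IsUnit r})] [AddCommGroup M] [Module R M]
    [TopologicalSpace M] [ContinuousAdd M] [ContinuousSMul R M] [AddCommGroup N] [Module R N]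
    (f : M →ₗ[R] N) {U : Set M} (hU : IsOpen U) (hne : U.Nonempty) (h : ∀ u ∈ U, f u = 0) :
    f = 0 := by
  have hker : LinearMap.ker f = ⊤ :=
    (LinearMap.ker f).eq_top_of_nonempty_interior' <| hne.mono <| hU.subset_interior_iff.mpr h
  exact LinearMap.ker_eq_top.mp hker

theorem semiEquicontinuous_vanishes_on_bracket_general
    {g : Type*} [LieRing g] [LieAlgebra ℝ g] [TopologicalSpace g]
    [IsTopologicalAddGroup g] [ContinuousSMul ℝ g]
    (E : Set (g →L[ℝ] ℝ))
    (hE : ∃ U : Set g, IsOpen U ∧ U.Nonempty ∧ ∃ C : ℝ, ∀ x ∈ U, ∀ lam ∈ E, -lam x ≤ C)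
    (x : g)
    (hinv : ∀ lam ∈ E, ∀ t : ℝ, ∃ mu ∈ E, ∀ y : g, mu y = lam (y + t • ⁅x, y⁆)) :
    ∀ lam ∈ E, ∀ y : g, lam ⁅x, y⁆ = 0 := by
  obtain ⟨U, hUo, hUne, C, hC⟩ := hE
  intro lam hlam
  have hU : ∀ u ∈ U, lam ⁅x, u⁆ = 0 := fun u hu =>
    lam.toLinearMap.apply_eq_zero_of_bddBelow_line u ⁅x, u⁆ ⟨-C, by
      rintro _ ⟨t, rfl⟩
      obtain ⟨mu, hmu, hmu_eq⟩ := hinv lam hlam t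
      have hbound := hC u hu mu hmu
      rw [hmu_eq] at hbound
      simp only [ContinuousLinearMap.coe_coe]
      linarith⟩
  have hzero := (lam.toLinearMap ∘ₗ LieAlgebra.ad ℝ g x).eq_zero_of_forall_mem_isOpen hUo hUne hU
  exact fun y => LinearMap.congr_fun hzero y

/-- If `E` is a semi-equicontinuous set of continuous linear functionals on a
real topological Lie algebra `g`, `x ∈ g` satisfies `(ad x)² = 0`, and `E` is invariant under
precomposition with `id + t·ad x` for all `t ∈ ℝ`, then every `λ ∈ E` vanishes on `[x, g]`. -/
theorem semiEquicontinuous_vanishes_on_bracket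
    {g : Type*} [LieRing g] [LieAlgebra ℝ g] [TopologicalSpace g]
    [IsTopologicalAddGroup g] [ContinuousSMul ℝ g]
    (E : Set (g →L[ℝ] ℝ))
    (hE : ∃ U : Set g, IsOpen U ∧ U.Nonempty ∧ ∃ C : ℝ, ∀ x ∈ U, ∀ lam ∈ E, -lam x ≤ C)
    (x : g) (hx : ∀ y : g, ⁅x, ⁅x, y⁆⁆ = 0)
    (hinv : ∀ lam ∈ E, ∀ t : ℝ, ∃ mu ∈ E, ∀ y : g, mu y = lam (y + t • ⁅x, y⁆)) :
    ∀ lam ∈ E, ∀ y : g, lam ⁅x, y⁆ = 0 :=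
  semiEquicontinuous_vanishes_on_bracket_general E hE x hinv
end

section
/- Let g be a real Lie algebra in which all abelian ideals are central. Then every nilpotent ideal n of g satisfies C³(n) = 0 (i.e. [n,[n,n]] = 0) and C²(n) = [n,n] is contained in the center z(g) of g. -/
/-!
Write `Cᵏ` for the lower central series of the nilpotent ideal `n`. Since `⁅Cⁱ, Cʲ⁆ ≤ Cⁱ⁺ʲ`,
if `Cᵏ⁺¹` is central for some `k ≥ 2` then `⁅Cᵏ, Cᵏ⁆ ≤ C²ᵏ ≤ Cᵏ⁺² = ⁅n, Cᵏ⁺¹⁆ = 0`, so the ideal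
`Cᵏ` is abelian and hence central. Starting from `Cᵏ = 0`, downward induction shows that
`C² = ⁅n, n⁆` is central, and then `C³ = ⁅n, C²⁆ = 0`.
-/

namespace LieIdeal

open LieAlgebra

variable {R L : Type*} [CommRing R] [LieRing L] [LieAlgebra R L]

theorem lie_lie_le_sup (I J K : LieIdeal R L) : ⁅I, ⁅J, K⁆⁆ ≤ ⁅⁅I, J⁆, K⁆ ⊔ ⁅J, ⁅I, K⁆⁆ := by
  rw [LieSubmodule.lie_le_iff]
  intro x hx m hm
  rw [← LieSubmodule.mem_toSubmodule, LieSubmodule.lieIdeal_oper_eq_linear_span'] at hm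
  induction hm using Submodule.span_induction with
  | mem m hm =>
    obtain ⟨y, hy, z, hz, rfl⟩ := hm
    rw [leibniz_lie x y z]
    exact add_mem (LieSubmodule.mem_sup_left (LieSubmodule.lie_mem_lie
        (LieSubmodule.lie_mem_lie hx hy) hz))
      (LieSubmodule.mem_sup_right (LieSubmodule.lie_mem_lie hy (LieSubmodule.lie_mem_lie hx hz)))
  | zero => simp
  | add a b _ _ ha hb => rw [lie_add]; exact add_mem ha hb
  | smul t a _ ha => rw [lie_smul]; exact Submodule.smul_mem _ t ha

theorem lie_eq_bot_of_le_center (I : LieIdeal R L) {J : LieIdeal R L} (hJ : J ≤ center R L) :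
    ⁅I, J⁆ = ⊥ :=
  eq_bot_iff.2 <| (LieSubmodule.mono_lie_right I hJ).trans
    (LieModule.ideal_oper_maxTrivSubmodule_eq_bot R L L I).le

/-- The lower central series of `I` as a Lie algebra in its own right, shifted by one:
`I.selfLcs k = Cᵏ⁺¹(I)`. Unlike `LieIdeal.lcs`, it starts from `I` rather than from `⊤`. -/
def selfLcs (I : LieIdeal R L) (k : ℕ) : LieIdeal R L :=
  (fun J => ⁅I, J⁆)^[k] I

variable (I : LieIdeal R L)

theorem selfLcs_succ (k : ℕ) : I.selfLcs (k + 1) = ⁅I, I.selfLcs k⁆ :=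
  Function.iterate_succ_apply' _ k I

theorem selfLcs_antitone : Antitone I.selfLcs :=
  antitone_nat_of_succ_le fun k => (I.selfLcs_succ k).trans_le (LieSubmodule.lie_le_right _ _)

theorem lie_selfLcs_le (j k : ℕ) : ⁅I.selfLcs j, I.selfLcs k⁆ ≤ I.selfLcs (j + k + 1) := by
  induction j generalizing k with
  | zero => rw [zero_add, selfLcs_succ]; rfl
  | succ j ih =>
    rw [selfLcs_succ, LieSubmodule.lie_comm]
    refine (lie_lie_le_sup _ _ _).trans (sup_le ?_ ?_)
    · rw [LieSubmodule.lie_comm _ I, ← selfLcs_succ, LieSubmodule.lie_comm]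
      exact (ih (k + 1)).trans (I.selfLcs_antitone (by omega))
    · rw [LieSubmodule.lie_comm _ (I.selfLcs j)]
      refine (LieSubmodule.mono_lie_right I (ih k)).trans ?_
      rw [← selfLcs_succ]
      exact I.selfLcs_antitone (by omega)

variable {I}
variable (habelian : ∀ J : LieIdeal R L, ⁅J, J⁆ = ⊥ → J ≤ center R L)
include habelian

theorem selfLcs_le_center_of_succ {k : ℕ} (hk : 1 ≤ k) (hsucc : I.selfLcs (k + 1) ≤ center R L) :
    I.selfLcs k ≤ center R L := by
  refine habelian _ (eq_bot_iff.2 ?_)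
  calc ⁅I.selfLcs k, I.selfLcs k⁆ ≤ I.selfLcs (k + k + 1) := I.lie_selfLcs_le k k
    _ ≤ I.selfLcs (k + 1 + 1) := I.selfLcs_antitone (by omega)
    _ = ⊥ := by rw [selfLcs_succ, lie_eq_bot_of_le_center I hsucc]

theorem selfLcs_le_center {m : ℕ} (hm : I.selfLcs m = ⊥) {j : ℕ} (hj : 1 ≤ j) :
    I.selfLcs j ≤ center R L := by
  suffices ∀ d j, 1 ≤ j → m ≤ j + d → I.selfLcs j ≤ center R L from this m j hj (by omega)
  intro d
  induction d with
  | zero => exact fun j _ hmj => (I.selfLcs_antitone hmj).trans (hm ▸ bot_le)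
  | succ d ih =>
    exact fun j hj hmj => selfLcs_le_center_of_succ habelian hj (ih (j + 1) (by omega) (by omega))

end LieIdeal

open LieIdeal in
/-- In a real Lie algebra in which all abelian ideals are central, every
nilpotent ideal `n` satisfies `C³(n) = ⁅n, ⁅n, n⁆⁆ = 0` and `C²(n) = ⁅n, n⁆ ⊆ z(g)`. -/
theorem nilpotent_ideal_of_abelian_ideals_central
    {g : Type*} [LieRing g] [LieAlgebra ℝ g]
    (habelian : ∀ I : LieIdeal ℝ g, (∀ a ∈ I, ∀ b ∈ I, ⁅a, b⁆ = (0 : g)) →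
      I ≤ LieAlgebra.center ℝ g)
    (n : LieIdeal ℝ g)
    (hnil : ∃ k : ℕ, (fun J : LieIdeal ℝ g => ⁅n, J⁆)^[k] n = ⊥) :
    ⁅n, ⁅n, n⁆⁆ = (⊥ : LieIdeal ℝ g) ∧ ⁅n, n⁆ ≤ LieAlgebra.center ℝ g := by
  obtain ⟨m, hm⟩ := hnil
  have habelian' : ∀ J : LieIdeal ℝ g, ⁅J, J⁆ = ⊥ → J ≤ LieAlgebra.center ℝ g :=
    fun J hJ => habelian J ((LieSubmodule.lie_eq_bot_iff J J).1 hJ)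
  have hcentral : n.selfLcs 1 ≤ LieAlgebra.center ℝ g := selfLcs_le_center habelian' hm le_rfl
  exact ⟨lie_eq_bot_of_le_center n hcentral, hcentral⟩
end

section
/- Let g be a real nilpotent Lie algebra in which all abelian ideals are central. Then g is abelian, i.e. [g,g] = 0. -/
/-!
In a nilpotent Lie algebra the upper central series exhausts the algebra, so a proper Lie ideal
is never self-normalizing. If the center `z` were proper, some `x ∉ z` would normalize it, and
then `z + R ∙ x` would be an abelian ideal that is not central.
-/

namespace LieSubmodule

variable {R L M : Type*} [CommRing R] [LieRing L] [LieAlgebra R L]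
  [AddCommGroup M] [Module R M] [LieRingModule L M] [LieModule R L M]

theorem eq_top_of_normalizer_eq_self [LieModule.IsNilpotent L M] {N : LieSubmodule R L M}
    (h : N.normalizer = N) : N = ⊤ := by
  obtain ⟨k, hk⟩ := (LieModule.isNilpotent_iff_exists_ucs_eq_top R).mp ‹_›
  exact eq_top_iff.mpr (hk ▸ ucs_le_of_normalizer_eq_self h k)

def supSpanSingleton (N : LieSubmodule R L M) {m : M} (hm : m ∈ N.normalizer) :
    LieSubmodule R L M where
  toSubmodule := (N : Submodule R M) ⊔ R ∙ m
  lie_mem {x n} hn := by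
    have hle : (N : Submodule R M) ⊔ R ∙ m ≤ (N.normalizer : Submodule R M) :=
      sup_le N.le_normalizer ((Submodule.span_singleton_le_iff_mem _ _).mpr hm)
    exact Submodule.mem_sup_left ((N.mem_normalizer n).mp (hle hn) x)

end LieSubmodule

namespace LieAlgebra

variable {R L : Type*} [CommRing R] [LieRing L] [LieAlgebra R L]

theorem lie_eq_zero_of_mem_center_sup_span_singleton {x a b : L}
    (ha : a ∈ (center R L : Submodule R L) ⊔ R ∙ x)
    (hb : b ∈ (center R L : Submodule R L) ⊔ R ∙ x) : ⁅a, b⁆ = 0 := by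
  obtain ⟨c, hc, _, hs, rfl⟩ := Submodule.mem_sup.mp ha
  obtain ⟨d, hd, _, ht, rfl⟩ := Submodule.mem_sup.mp hb
  obtain ⟨s, rfl⟩ := Submodule.mem_span_singleton.mp hs
  obtain ⟨t, rfl⟩ := Submodule.mem_span_singleton.mp ht
  have hc' : ∀ y : L, ⁅c, y⁆ = 0 := fun y ↦ by
    rw [← lie_skew, (LieModule.mem_maxTrivSubmodule R L L c).mp hc y, neg_zero]
  have hd' : ∀ y : L, ⁅y, d⁆ = 0 := (LieModule.mem_maxTrivSubmodule R L L d).mp hd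
  simp [hc', hd']

end LieAlgebra

/-- A real nilpotent Lie algebra in which all abelian ideals are central
is abelian. -/
theorem nilpotent_with_abelian_ideals_central_is_abelian
    {g : Type*} [LieRing g] [LieAlgebra ℝ g]
    (hnilp : ∃ k : ℕ, LieModule.lowerCentralSeries ℝ g g k = ⊥)
    (habelian : ∀ I : LieIdeal ℝ g, (∀ a ∈ I, ∀ b ∈ I, ⁅a, b⁆ = (0 : g)) →
      I ≤ LieAlgebra.center ℝ g) :
    ∀ x y : g, ⁅x, y⁆ = 0 := by
  have : LieModule.IsNilpotent g g := (LieModule.isNilpotent_iff ℝ g g).mpr hnilp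
  have hself : (LieAlgebra.center ℝ g).normalizer = LieAlgebra.center ℝ g := by
    refine le_antisymm (fun x hx ↦ ?_) (LieAlgebra.center ℝ g).le_normalizer
    have hle := habelian (LieSubmodule.supSpanSingleton _ hx) fun a ha b hb ↦
      LieAlgebra.lie_eq_zero_of_mem_center_sup_span_singleton ha hb
    exact hle (Submodule.mem_sup_right (Submodule.mem_span_singleton_self x))
  have : IsLieAbelian g :=
    (LieAlgebra.isLieAbelian_iff_center_eq_top ℝ g).mpr
      (LieSubmodule.eq_top_of_normalizer_eq_self hself)
  exact fun x y ↦ trivial_lie_zero g g x y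
end

section
/- Let g be a real Lie algebra that is two-step solvable, i.e. D²(g) = [[g,g],[g,g]] = 0, and in which all abelian ideals are central. Then g is abelian, i.e. [g,g] = 0. -/
/-!
Since `D²(g) = 0`, the derived algebra `[g, g]` is an abelian ideal, hence central. A subspace
containing `[g, g]` is automatically an ideal, so for every `x` the subspace `ℝ x + z(g)` is an
ideal; it is abelian because `x` commutes with itself and with the center. Hence `x` is central.
-/

namespace LieAlgebra

variable {R L : Type*} [CommRing R] [LieRing L] [LieAlgebra R L]

lemma lie_mem_derivedSeries_succ {k : ℕ} {a b : L} (ha : a ∈ derivedSeries R L k)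
    (hb : b ∈ derivedSeries R L k) : ⁅a, b⁆ ∈ derivedSeries R L (k + 1) := by
  rw [derivedSeries_def, derivedSeriesOfIdeal_succ]
  exact LieSubmodule.lie_mem_lie ha hb

lemma lie_mem_derivedSeries_one (a b : L) : ⁅a, b⁆ ∈ derivedSeries R L 1 :=
  lie_mem_derivedSeries_succ (LieSubmodule.mem_top a) (LieSubmodule.mem_top b)

lemma lie_eq_zero_of_mem_derivedSeries_one (h : derivedSeries R L 2 = ⊥) {a b : L}
    (ha : a ∈ derivedSeries R L 1) (hb : b ∈ derivedSeries R L 1) : ⁅a, b⁆ = 0 := by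
  have hab : ⁅a, b⁆ ∈ derivedSeries R L 2 := lie_mem_derivedSeries_succ ha hb
  rwa [h, LieSubmodule.mem_bot] at hab

lemma lie_eq_zero_of_mem_span_sup_center (x : L) {a b : L}
    (ha : a ∈ (R ∙ x) ⊔ (center R L : Submodule R L))
    (hb : b ∈ (R ∙ x) ⊔ (center R L : Submodule R L)) : ⁅a, b⁆ = 0 := by
  obtain ⟨_, hu, z, hz, rfl⟩ := Submodule.mem_sup.mp ha
  obtain ⟨_, hu', z', hz', rfl⟩ := Submodule.mem_sup.mp hb
  obtain ⟨c, rfl⟩ := Submodule.mem_span_singleton.mp hu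
  obtain ⟨c', rfl⟩ := Submodule.mem_span_singleton.mp hu'
  have hz : ∀ w : L, ⁅z, w⁆ = 0 := fun w => by
    rw [← lie_skew, (LieModule.mem_maxTrivSubmodule R L L z).mp hz w, neg_zero]
  have hz' : ∀ w : L, ⁅w, z'⁆ = 0 := (LieModule.mem_maxTrivSubmodule R L L z').mp hz'
  simp [hz, hz']

end LieAlgebra

namespace LieIdeal

open LieAlgebra

variable {R L : Type*} [CommRing R] [LieRing L] [LieAlgebra R L]

def ofDerivedSeriesOneLE (S : Submodule R L) (h : (derivedSeries R L 1 : Submodule R L) ≤ S) :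
    LieIdeal R L :=
  { S with lie_mem := fun {x m} _ => h (lie_mem_derivedSeries_one x m) }

end LieIdeal

open LieAlgebra in
/-- A real two-step solvable Lie algebra (`D²(g) = 0`) in which all abelian
ideals are central is abelian. -/
theorem twoStepSolvable_with_abelian_ideals_central_is_abelian
    {g : Type*} [LieRing g] [LieAlgebra ℝ g]
    (h2step : LieAlgebra.derivedSeries ℝ g 2 = ⊥)
    (habelian : ∀ I : LieIdeal ℝ g, (∀ a ∈ I, ∀ b ∈ I, ⁅a, b⁆ = (0 : g)) →
      I ≤ LieAlgebra.center ℝ g) :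
    ∀ x y : g, ⁅x, y⁆ = 0 := by
  have hderived : derivedSeries ℝ g 1 ≤ center ℝ g :=
    habelian _ fun _ ha _ hb => lie_eq_zero_of_mem_derivedSeries_one h2step ha hb
  intro x y
  let I := LieIdeal.ofDerivedSeriesOneLE ((ℝ ∙ x) ⊔ (center ℝ g : Submodule ℝ g))
    (le_sup_of_le_right hderived)
  have hx : x ∈ center ℝ g :=
    habelian I (fun _ ha _ hb => lie_eq_zero_of_mem_span_sup_center x ha hb)
      (Submodule.mem_sup_left (Submodule.mem_span_singleton_self x))
  rw [← lie_skew, (LieModule.mem_maxTrivSubmodule ℝ g g x).mp hx y, neg_zero]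
end

section
/- Let V be a real vector space, Q a symmetric bilinear form on V, and α a linear functional on V. Then the function f_α : V → ℝ, f_α(v) = α(v) + Q(v,v), is bounded from below if and only if Q is positive semidefinite (Q(v,v) ≥ 0 for all v) and sup{ α(v) : v ∈ V, Q(v,v) ≤ 1 } < ∞. -/
/-!
Everything factors through the condition `α v ^ 2 ≤ K * q v` for some `K > 0`. If `α + q ≥ -m`
with `m > 0`, then `t ↦ q v * t ^ 2 + α v * t + m` is a nonnegative quadratic polynomial, and its
discriminant gives `α v ^ 2 ≤ 4 m q v`; conversely, completing the square gives
`α v + α v ^ 2 / K ≥ -K / 4`. The condition in turn amounts to semidefiniteness plus finiteness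
of `‖α‖_q`: rescaling `v` to `q v = 1` gives `|α v| ≤ ‖α‖_q √(q v)`, and on the cone `q ≤ 0`
every multiple of `v` lies in the unit ball, so the bounded functional `α` vanishes there.
-/

namespace QuadraticMap

section OrderedField

variable {𝕜 V : Type*} [Field 𝕜] [LinearOrder 𝕜] [IsStrictOrderedRing 𝕜]
  [AddCommGroup V] [Module 𝕜 V] (q : QuadraticForm 𝕜 V) (α : V →ₗ[𝕜] 𝕜)

theorem exists_sq_le_mul_of_bddBelow_add (h : BddBelow (Set.range fun v => α v + q v)) :
    ∃ K > 0, ∀ v, α v ^ 2 ≤ K * q v := by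
  obtain ⟨c, hc⟩ := h
  set m := max (-c) 1
  refine ⟨4 * m, by positivity, fun v => ?_⟩
  have hpoly : ∀ t : 𝕜, 0 ≤ q v * (t * t) + α v * t + m := fun t => by
    have := hc ⟨t • v, rfl⟩
    simp only [map_smul, QuadraticMap.map_smul, smul_eq_mul] at this
    linarith [le_max_left (-c) 1]
  have hdiscr := discrim_le_zero hpoly
  rw [discrim] at hdiscr
  linarith

theorem bddBelow_add_of_sq_le_mul {K : 𝕜} (hK : 0 < K) (h : ∀ v, α v ^ 2 ≤ K * q v) :
    BddBelow (Set.range fun v => α v + q v) := by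
  refine ⟨-(K / 4), ?_⟩
  rintro _ ⟨v, rfl⟩
  have hq : α v ^ 2 / K ≤ q v := by rw [div_le_iff₀' hK]; exact h v
  have hsq : 0 ≤ (α v + K / 2) ^ 2 / K := by positivity
  have hsq_eq : (α v + K / 2) ^ 2 / K = α v + α v ^ 2 / K + K / 4 := by field_simp; ring
  dsimp only
  linarith

theorem bddBelow_add_iff_exists_sq_le_mul :
    BddBelow (Set.range fun v => α v + q v) ↔ ∃ K > 0, ∀ v, α v ^ 2 ≤ K * q v :=
  ⟨exists_sq_le_mul_of_bddBelow_add q α, fun ⟨_, hK, h⟩ => bddBelow_add_of_sq_le_mul q α hK h⟩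

theorem nonneg_of_sq_le_mul {K : 𝕜} (hK : 0 < K) (h : ∀ v, α v ^ 2 ≤ K * q v) (v : V) :
    0 ≤ q v :=
  nonneg_of_mul_nonneg_right ((sq_nonneg _).trans (h v)) hK

theorem bddAbove_image_of_sq_le_mul {K : 𝕜} (hK : 0 ≤ K) (h : ∀ v, α v ^ 2 ≤ K * q v) :
    BddAbove (α '' {v | q v ≤ 1}) := by
  refine ⟨(1 + K) / 2, ?_⟩
  rintro _ ⟨v, hv, rfl⟩
  nlinarith [sq_nonneg (α v - 1), h v, mul_le_of_le_one_right hK hv]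

end OrderedField

variable {V : Type*} [AddCommGroup V] [Module ℝ V] (q : QuadraticForm ℝ V) (α : V →ₗ[ℝ] ℝ)

theorem eq_zero_of_nonpos_of_forall_le {M : ℝ} (h : ∀ v, q v ≤ 1 → α v ≤ M) {v : V}
    (hv : q v ≤ 0) : α v = 0 := by
  by_contra hα
  have hle := h (((M + 1) / α v) • v) (by
    rw [QuadraticMap.map_smul, smul_eq_mul]; nlinarith [mul_self_nonneg ((M + 1) / α v)])
  rw [map_smul, smul_eq_mul, div_mul_cancel₀ _ hα] at hle
  linarith

theorem le_mul_sqrt_of_forall_le {M : ℝ} (h : ∀ v, q v ≤ 1 → α v ≤ M) (v : V) :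
    α v ≤ M * √(q v) := by
  rcases le_or_gt (q v) 0 with hv | hv
  · rw [eq_zero_of_nonpos_of_forall_le q α h hv, Real.sqrt_eq_zero'.2 hv, mul_zero]
  · have hs : 0 < √(q v) := Real.sqrt_pos.2 hv
    have hunit : q ((√(q v))⁻¹ • v) = 1 := by
      rw [QuadraticMap.map_smul, smul_eq_mul, ← mul_inv, Real.mul_self_sqrt hv.le,
        inv_mul_cancel₀ hv.ne']
    have hle := h _ hunit.le
    rw [map_smul, smul_eq_mul, inv_mul_le_iff₀ hs] at hle
    linarith

theorem exists_sq_le_mul_of_bddAbove (hq : ∀ v, 0 ≤ q v) (h : BddAbove (α '' {v | q v ≤ 1})) :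
    ∃ K > 0, ∀ v, α v ^ 2 ≤ K * q v := by
  obtain ⟨M, hM⟩ := h
  have hM' : ∀ v, q v ≤ 1 → α v ≤ M := fun v hv => hM ⟨v, hv, rfl⟩
  refine ⟨M ^ 2 + 1, by positivity, fun v => ?_⟩
  have habs : |α v| ≤ M * √(q v) := abs_le.2 ⟨neg_le.1 <| by
    simpa using le_mul_sqrt_of_forall_le q α hM' (-v), le_mul_sqrt_of_forall_le q α hM' v⟩
  calc α v ^ 2 = |α v| ^ 2 := (sq_abs _).symm
    _ ≤ (M * √(q v)) ^ 2 := pow_le_pow_left₀ (abs_nonneg _) habs 2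
    _ = M ^ 2 * q v := by rw [mul_pow, Real.sq_sqrt (hq v)]
    _ ≤ (M ^ 2 + 1) * q v := by nlinarith [hq v]

theorem exists_sq_le_mul_iff :
    (∃ K > 0, ∀ v, α v ^ 2 ≤ K * q v) ↔
      (∀ v, 0 ≤ q v) ∧ BddAbove (α '' {v | q v ≤ 1}) :=
  ⟨fun ⟨_, hK, h⟩ => ⟨nonneg_of_sq_le_mul q α hK h, bddAbove_image_of_sq_le_mul q α hK.le h⟩,
    fun ⟨hq, h⟩ => exists_sq_le_mul_of_bddAbove q α hq h⟩

theorem bddBelow_add_iff :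
    BddBelow (Set.range fun v => α v + q v) ↔ (∀ v, 0 ≤ q v) ∧ BddAbove (α '' {v | q v ≤ 1}) :=
  (bddBelow_add_iff_exists_sq_le_mul q α).trans (exists_sq_le_mul_iff q α)

end QuadraticMap

theorem quadratic_bddBelow_iff_general
    {V : Type*} [AddCommGroup V] [Module ℝ V]
    (Q : V →ₗ[ℝ] V →ₗ[ℝ] ℝ)
    (α : V →ₗ[ℝ] ℝ) :
    BddBelow (Set.range fun v : V => α v + Q v v) ↔
      (∀ v : V, 0 ≤ Q v v) ∧ BddAbove (⇑α '' {v : V | Q v v ≤ 1}) :=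
  QuadraticMap.bddBelow_add_iff (LinearMap.BilinMap.toQuadraticMap Q) α

/-- For a symmetric bilinear form `Q` and a linear functional `α` on a real
vector space `V`, the function `v ↦ α v + Q v v` is bounded from below if and only if `Q` is
positive semidefinite and `‖α‖_Q = sup { α v : Q v v ≤ 1 } < ∞`. -/
theorem quadratic_bddBelow_iff
    {V : Type*} [AddCommGroup V] [Module ℝ V]
    (Q : V →ₗ[ℝ] V →ₗ[ℝ] ℝ) (hsymm : ∀ v w : V, Q v w = Q w v)
    (α : V →ₗ[ℝ] ℝ) :
    BddBelow (Set.range fun v : V => α v + Q v v) ↔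
      (∀ v : V, 0 ≤ Q v v) ∧ BddAbove (⇑α '' {v : V | Q v v ≤ 1}) :=
  quadratic_bddBelow_iff_general Q α
end

section
/- Let V be a real vector space, Q a positive semidefinite symmetric bilinear form on V, and α a linear functional on V such that N := sup{ α(v) : v ∈ V, Q(v,v) ≤ 1 } is finite. Then inf_{v ∈ V} ( α(v) + Q(v,v) ) = −N²/4. -/
/-!
Write `q v = Q v v`, so that `q (s • v) = s² q v`. Rescaling `v` into the set `q ≤ 1` gives
`α v ≤ N √(q v)`, whence `α v + q v ≥ q v - N √(q v) ≥ -N²/4` by completing the square. The bound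
is approached along `v = -(N/2) w` with `q w ≤ 1` and `α w` close to `N`.
-/

namespace LinearMap

variable {V : Type*} [AddCommGroup V] [Module ℝ V]
  {Q : V →ₗ[ℝ] V →ₗ[ℝ] ℝ} {α : V →ₗ[ℝ] ℝ} {N : ℝ}

lemma apply_smul_smul_self (Q : V →ₗ[ℝ] V →ₗ[ℝ] ℝ) (s : ℝ) (v : V) :
    Q (s • v) (s • v) = s ^ 2 * Q v v := by
  simp only [map_smul, smul_apply, smul_eq_mul]
  ring

lemma nonneg_of_isLUB_image_le_one (hN : IsLUB (α '' {v | Q v v ≤ 1}) N) : 0 ≤ N :=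
  hN.1 ⟨0, by simp, map_zero α⟩

lemma apply_le_mul_sqrt_of_isLUB (hN : IsLUB (α '' {v | Q v v ≤ 1}) N) (v : V) :
    α v ≤ N * √(Q v v) := by
  rcases le_or_gt (Q v v) 0 with hv | hv
  · -- the whole line through `v` lies in `{Q ≤ 1}`, so `α` cannot be positive on `v`
    rw [Real.sqrt_eq_zero'.2 hv, mul_zero]
    by_contra! hαv
    have hmem : α (((N + 1) / α v) • v) ≤ N := by
      refine hN.1 ⟨_, ?_, rfl⟩
      rw [Set.mem_ofPred_eq, apply_smul_smul_self]
      nlinarith [sq_nonneg ((N + 1) / α v)]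
    rw [map_smul, smul_eq_mul, div_mul_cancel₀ _ hαv.ne'] at hmem
    linarith
  · have ht : 0 < √(Q v v) := Real.sqrt_pos.2 hv
    have hmem : α ((√(Q v v))⁻¹ • v) ≤ N := by
      refine hN.1 ⟨_, ?_, rfl⟩
      rw [Set.mem_ofPred_eq, apply_smul_smul_self, inv_pow, Real.sq_sqrt hv.le,
        inv_mul_cancel₀ hv.ne']
    rw [map_smul, smul_eq_mul, inv_mul_le_iff₀ ht] at hmem
    linarith

lemma neg_sq_div_four_le_apply_add_apply_self (hpos : ∀ v : V, 0 ≤ Q v v)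
    (hN : IsLUB (α '' {v | Q v v ≤ 1}) N) (v : V) :
    -(N ^ 2) / 4 ≤ α v + Q v v := by
  have hneg := apply_le_mul_sqrt_of_isLUB hN (-v)
  simp only [map_neg, neg_apply, neg_neg] at hneg
  have hsq := Real.sq_sqrt (hpos v)
  nlinarith [sq_nonneg (√(Q v v) - N / 2)]

lemma le_neg_sq_div_four_of_mem_lowerBounds (hN : IsLUB (α '' {v | Q v v ≤ 1}) N) {b : ℝ}
    (hb : b ∈ lowerBounds (Set.range fun v => α v + Q v v)) :
    b ≤ -(N ^ 2) / 4 := by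
  have hN0 := nonneg_of_isLUB_image_le_one hN
  have hbound : N / 2 * N ≤ N ^ 2 / 4 - b := by
    refine (hN.mul_left (by positivity : 0 ≤ N / 2)).2 ?_
    rintro _ ⟨_, ⟨w, hw, rfl⟩, rfl⟩
    have hbw : b ≤ α (-(N / 2) • w) + Q (-(N / 2) • w) (-(N / 2) • w) := hb ⟨_, rfl⟩
    rw [apply_smul_smul_self, map_smul, smul_eq_mul] at hbw
    have hw' : Q w w ≤ 1 := hw
    show N / 2 * α w ≤ N ^ 2 / 4 - b
    nlinarith [sq_nonneg N]
  linarith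

end LinearMap

theorem quadratic_inf_eq_general
    {V : Type*} [AddCommGroup V] [Module ℝ V]
    (Q : V →ₗ[ℝ] V →ₗ[ℝ] ℝ)
    (hpos : ∀ v : V, 0 ≤ Q v v)
    (α : V →ₗ[ℝ] ℝ) (N : ℝ) (hN : IsLUB (⇑α '' {v : V | Q v v ≤ 1}) N) :
    IsGLB (Set.range fun v : V => α v + Q v v) (-(N ^ 2) / 4) := by
  refine ⟨?_, fun b hb => LinearMap.le_neg_sq_div_four_of_mem_lowerBounds hN hb⟩
  rintro _ ⟨v, rfl⟩
  exact LinearMap.neg_sq_div_four_le_apply_add_apply_self hpos hN v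

/-- For a positive semidefinite symmetric bilinear form `Q` and a linear
functional `α` with finite `Q`-norm `N = sup { α v : Q v v ≤ 1 }`, the infimum of
`v ↦ α v + Q v v` equals `-N²/4`. -/
theorem quadratic_inf_eq
    {V : Type*} [AddCommGroup V] [Module ℝ V]
    (Q : V →ₗ[ℝ] V →ₗ[ℝ] ℝ) (hsymm : ∀ v w : V, Q v w = Q w v)
    (hpos : ∀ v : V, 0 ≤ Q v v)
    (α : V →ₗ[ℝ] ℝ) (N : ℝ) (hN : IsLUB (⇑α '' {v : V | Q v v ≤ 1}) N) :
    IsGLB (Set.range fun v : V => α v + Q v v) (-(N ^ 2) / 4) :=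
  quadratic_inf_eq_general Q hpos α N hN
end

section
/- Let V be a real topological vector space, ω a nondegenerate alternating bilinear form on V (i.e. for every v ≠ 0 there is w with ω(v,w) ≠ 0), and D : V → V a linear map with ω(Dv,w) = −ω(v,Dw) for all v,w ∈ V. Let α be a linear functional on V, let x ∈ V, let z, t*, z*, t ∈ ℝ with z*·t > 0, and let U be a neighborhood of 0 in V such that for every x′ ∈ x + U the function v ↦ z*z + α(x′) − z*·ω(v,x′) + t·t* + t·α(Dv) + (t·z*/2)·ω(Dv,v) is bounded from below on V. Then ω(Dv,v) > 0 for every v ≠ 0, i.e. the symmetric bilinear form Q(v,w) := ω(Dv,w) is positive definite. -/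
/-!
Restricted to a line `s ↦ s • v`, each bounded-below function is a real quadratic polynomial in
`s` with leading coefficient `(t z*/2) ω(Dv,v)`. If `ω(Dv,v) ≤ 0` this coefficient is `≤ 0`, so
the linear coefficient `-z* ω(v, x + u) + t α(Dv)` must vanish for every `u ∈ U`. Comparing with
`u = 0` gives `ω(v, u) = 0` on the neighbourhood `U`, hence on all of `V` because `U` absorbs
every vector, and nondegeneracy forces `v = 0`.
-/

open Filter Set Topology

theorem eq_zero_of_bddBelow_range_linear {b c : ℝ}
    (h : BddBelow (range fun s : ℝ => b * s + c)) : b = 0 := by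
  by_contra hb
  obtain ⟨m, hm⟩ := h
  have := hm (mem_range_self ((m - c - 1) / b))
  simp only [mul_div_cancel₀ _ hb] at this
  linarith

theorem eq_zero_of_bddBelow_range_quadratic {a b c : ℝ} (ha : a ≤ 0)
    (h : BddBelow (range fun s : ℝ => a * s ^ 2 + b * s + c)) : b = 0 :=
  eq_zero_of_bddBelow_range_linear (c := c) <|
    BddBelow.range_mono _ (fun s => by nlinarith [sq_nonneg s]) h

theorem LinearMap.eq_zero_of_forall_mem_nhds_zero {𝕜 M N : Type*} [NontriviallyNormedField 𝕜]
    [AddCommGroup M] [Module 𝕜 M] [TopologicalSpace M] [ContinuousSMul 𝕜 M]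
    [AddCommGroup N] [Module 𝕜 N] (f : M →ₗ[𝕜] N) {U : Set M} (hU : U ∈ 𝓝 0)
    (hf : ∀ u ∈ U, f u = 0) : f = 0 := by
  ext w
  have hsmul : Tendsto (fun c : 𝕜 => c • w) (𝓝[≠] 0) (𝓝 0) :=
    (tendsto_nhdsWithin_of_tendsto_nhds tendsto_id).zero_smul_const w
  obtain ⟨c, hcU, hc⟩ := ((hsmul.eventually hU).and self_mem_nhdsWithin).exists
  have : c • f w = 0 := by rw [← map_smul]; exact hf _ hcU
  exact (smul_eq_zero.mp this).resolve_left hc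

theorem Q_positive_definite_of_bddBelow_general
    {V : Type*} [AddCommGroup V] [Module ℝ V] [TopologicalSpace V]
    [ContinuousSMul ℝ V]
    (ω : V →ₗ[ℝ] V →ₗ[ℝ] ℝ)
    (hnd : ∀ v : V, (∀ w : V, ω v w = 0) → v = 0)
    (D : V →ₗ[ℝ] V)
    (α : V →ₗ[ℝ] ℝ) (x : V) (z tstar zstar t : ℝ) (hzt : zstar * t > 0)
    (U : Set V) (hU : U ∈ nhds (0 : V))
    (hbdd : ∀ u ∈ U, BddBelow (Set.range fun v : V =>
      zstar * z + α (x + u) - zstar * ω v (x + u) + t * tstar + t * α (D v)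
        + (t * zstar / 2) * ω (D v) v)) :
    ∀ v : V, v ≠ 0 → 0 < ω (D v) v := by
  intro v hv
  by_contra! hQ
  have hlinear : ∀ u ∈ U, -zstar * ω v (x + u) + t * α (D v) = 0 := by
    intro u hu
    refine eq_zero_of_bddBelow_range_quadratic (a := t * zstar / 2 * ω (D v) v)
      (c := zstar * z + α (x + u) + t * tstar) (by nlinarith) ?_
    refine (hbdd u hu).mono ?_
    rintro _ ⟨s, rfl⟩
    refine ⟨s • v, ?_⟩
    simp only [map_smul, LinearMap.smul_apply, smul_eq_mul]
    ring
  have hωU : ∀ u ∈ U, ω v u = 0 := by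
    intro u hu
    have h₀ := hlinear 0 (mem_of_mem_nhds hU)
    have hu' := hlinear u hu
    rw [add_zero] at h₀
    rw [map_add] at hu'
    have : zstar * ω v u = 0 := by linarith
    exact (mul_eq_zero.mp this).resolve_left (left_ne_zero_of_mul hzt.ne')
  exact hv (hnd v (LinearMap.congr_fun ((ω v).eq_zero_of_forall_mem_nhds_zero hU hωU)))

/-- Let `ω` be a nondegenerate alternating bilinear form on a real topological
vector space `V` and `D` a linear map with `ω(Dv,w) = -ω(v,Dw)`. If, for some real numbers
`z, t*, z*, t` with `z*·t > 0`, a linear functional `α`, a point `x` and a neighborhood `U` of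
`0`, the quadratic functions
`v ↦ z*z + α(x') - z*·ω(v,x') + t·t* + t·α(Dv) + (t·z*/2)·ω(Dv,v)` are bounded from below for
every `x' ∈ x + U`, then `Q(v,w) := ω(Dv,w)` is positive definite. -/
theorem Q_positive_definite_of_bddBelow
    {V : Type*} [AddCommGroup V] [Module ℝ V] [TopologicalSpace V]
    [IsTopologicalAddGroup V] [ContinuousSMul ℝ V]
    (ω : V →ₗ[ℝ] V →ₗ[ℝ] ℝ) (halt : ∀ v : V, ω v v = 0)
    (hnd : ∀ v : V, (∀ w : V, ω v w = 0) → v = 0)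
    (D : V →ₗ[ℝ] V) (hskew : ∀ v w : V, ω (D v) w = -ω v (D w))
    (α : V →ₗ[ℝ] ℝ) (x : V) (z tstar zstar t : ℝ) (hzt : zstar * t > 0)
    (U : Set V) (hU : U ∈ nhds (0 : V))
    (hbdd : ∀ u ∈ U, BddBelow (Set.range fun v : V =>
      zstar * z + α (x + u) - zstar * ω v (x + u) + t * tstar + t * α (D v)
        + (t * zstar / 2) * ω (D v) v)) :
    ∀ v : V, v ≠ 0 → 0 < ω (D v) v :=
  Q_positive_definite_of_bddBelow_general ω hnd D α x z tstar zstar t hzt U hU hbdd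
end

section
/- Let V be a real topological vector space, ω a nondegenerate alternating bilinear form on V, and D : V → V a linear map with ω(Dv,w) = −ω(v,Dw) for all v,w ∈ V, and set Q(v,w) := ω(Dv,w). Let α be a linear functional on V, x ∈ V, z, t*, z*, t ∈ ℝ with z*·t > 0, and let U be a neighborhood of 0 in V such that the functions f_{x′}(v) := z*z + α(x′) − z*·ω(v,x′) + t·t* + t·α(Dv) + (t·z*/2)·ω(Dv,v), for x′ ∈ x + U, are uniformly bounded from below on V (there is C with f_{x′}(v) ≥ C for all x′ ∈ x + U, v ∈ V). Then there exist a neighborhood U₀ of 0 in V and M ≥ 0 with sup{ ω(y,v) : Q(v,v) ≤ 1 } ≤ M for all y ∈ U₀; in particular, for every y ∈ V the functional v ↦ ω(y,v) is bounded on {v : Q(v,v) ≤ 1}, and also sup{ α(Dv) : Q(v,v) ≤ 1 } < ∞. -/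
/-!
Replacing `v` by `s • v` turns `f_{x'}(v) - C ≥ 0` into a nonnegative quadratic polynomial in `s`,
so its discriminant is nonpositive:
`(t α(Dv) - z* ω(v,x'))² ≤ 2 t z* Q(v,v) (z* z + α(x') + t t* - C)`, and the last factor is
nonnegative (take `v = 0`). On the `Q`-unit ball, adding the inequalities for `x' = x ± u`
cancels both `α(u)` and the cross term, leaving `(z* ω(v,u))² ≤ 2 t z* (z* z + α(x) + t t* - C)`
for `u ∈ U ∩ -U`. Neighborhoods of `0` absorb every vector, which bounds each `ω(y,·)`, and
`x' = x` then bounds `t α(Dv)` by `z* ω(v,x)` up to a constant.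
-/

open Filter Topology

theorem LinearMap.sq_le_four_mul_of_forall_nonneg {V : Type*} [AddCommGroup V] [Module ℝ V]
    (ℓ : V →ₗ[ℝ] ℝ) (B : V →ₗ[ℝ] V →ₗ[ℝ] ℝ) {c : ℝ} (h : ∀ v, 0 ≤ c + ℓ v + B v v) (v : V) :
    ℓ v ^ 2 ≤ 4 * B v v * c := by
  have hquad : ∀ s : ℝ, 0 ≤ B v v * (s * s) + ℓ v * s + c := fun s => by
    have := h (s • v)
    simp only [map_smul, LinearMap.smul_apply, smul_eq_mul] at this
    linarith
  have := discrim_le_zero hquad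
  rw [discrim] at this
  linarith

theorem LinearMap.exists_le_of_le_on_nhds_zero {V W : Type*} [AddCommGroup V] [Module ℝ V]
    [TopologicalSpace V] [ContinuousSMul ℝ V] [AddCommGroup W] [Module ℝ W]
    (B : V →ₗ[ℝ] W →ₗ[ℝ] ℝ) {U₀ : Set V} (hU₀ : U₀ ∈ 𝓝 0) {S : Set W} {M : ℝ}
    (hM : ∀ u ∈ U₀, ∀ w ∈ S, B u w ≤ M) (y : V) : ∃ My, ∀ w ∈ S, B y w ≤ My := by
  have hsmul : Tendsto (fun r : ℝ => r • y) (𝓝[>] 0) (𝓝 0) := by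
    simpa using (tendsto_id.smul_const y).mono_left (nhdsWithin_le_nhds (a := (0 : ℝ)))
  obtain ⟨r, hry, hr⟩ := ((hsmul.eventually hU₀).and self_mem_nhdsWithin).exists
  refine ⟨M / r, fun w hw => (le_div_iff₀' (Set.mem_Ioi.mp hr)).mpr ?_⟩
  simpa using hM _ hry w hw

section LowerBoundedFamily

variable {V : Type*} [AddCommGroup V] [Module ℝ V]
  {ω : V →ₗ[ℝ] V →ₗ[ℝ] ℝ} {D : V →ₗ[ℝ] V} {α : V →ₗ[ℝ] ℝ} {z tstar zstar t C : ℝ}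

theorem sq_sub_le_of_forall_le (hzt : 0 < zstar * t) {x' : V}
    (hx' : ∀ v, C ≤ zstar * z + α x' - zstar * ω v x' + t * tstar + t * α (D v)
      + (t * zstar / 2) * ω (D v) v)
    {v : V} (hv : ω (D v) v ≤ 1) :
    (t * α (D v) - zstar * ω v x') ^ 2 ≤ 2 * t * zstar * (zstar * z + α x' + t * tstar - C) := by
  set K := zstar * z + α x' + t * tstar - C
  have hK : 0 ≤ K := sub_nonneg.mpr (by simpa using hx' 0)
  have hdisc : (t * α (D v) - zstar * ω v x') ^ 2 ≤ 4 * ((t * zstar / 2) * ω (D v) v) * K :=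
    (t • α ∘ₗ D - zstar • ω.flip x').sq_le_four_mul_of_forall_nonneg ((t * zstar / 2) • ω ∘ₗ D)
      (fun w => show 0 ≤ K + (t * α (D w) - zstar * ω w x') + (t * zstar / 2) * ω (D w) w by
        linarith [hx' w]) v
  have htz : 0 ≤ t * zstar := by linarith [mul_comm zstar t]
  nlinarith [mul_nonneg (mul_nonneg htz hK) (sub_nonneg.mpr hv)]

theorem sq_mul_le_of_forall_le_add_sub (hzt : 0 < zstar * t) {x u : V}
    (hplus : ∀ v, C ≤ zstar * z + α (x + u) - zstar * ω v (x + u) + t * tstar + t * α (D v)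
      + (t * zstar / 2) * ω (D v) v)
    (hminus : ∀ v, C ≤ zstar * z + α (x + -u) - zstar * ω v (x + -u) + t * tstar + t * α (D v)
      + (t * zstar / 2) * ω (D v) v)
    {v : V} (hv : ω (D v) v ≤ 1) :
    (zstar * ω v u) ^ 2 ≤ 2 * t * zstar * (zstar * z + α x + t * tstar - C) := by
  have hp := sq_sub_le_of_forall_le hzt hplus hv
  have hm := sq_sub_le_of_forall_le hzt hminus hv
  simp only [map_add, map_neg] at hp hm
  nlinarith [sq_nonneg (t * α (D v) - zstar * ω v x)]

theorem exists_nhds_zero_apply_le (halt : ω.IsAlt) (hzt : 0 < zstar * t) {x : V}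
    [TopologicalSpace V] [IsTopologicalAddGroup V] {U : Set V} (hU : U ∈ 𝓝 0)
    (hbdd : ∀ u ∈ U, ∀ v : V,
      C ≤ zstar * z + α (x + u) - zstar * ω v (x + u) + t * tstar + t * α (D v)
        + (t * zstar / 2) * ω (D v) v) :
    ∃ U₀ ∈ 𝓝 (0 : V), ∃ M : ℝ, 0 ≤ M ∧ ∀ y ∈ U₀, ∀ v : V, ω (D v) v ≤ 1 → ω y v ≤ M := by
  refine ⟨U ∩ -U, inter_mem hU (neg_mem_nhds_zero V hU),
    √(2 * t * zstar * (zstar * z + α x + t * tstar - C)) / |zstar|, by positivity, ?_⟩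
  rintro y ⟨hy, hny⟩ v hv
  have hzstar : 0 < |zstar| := abs_pos.mpr (left_ne_zero_of_mul hzt.ne')
  have hsq := sq_mul_le_of_forall_le_add_sub hzt (hbdd y hy) (hbdd (-y) hny) hv
  rw [le_div_iff₀ hzstar, ← halt.neg, mul_comm]
  calc |zstar| * -ω v y ≤ |zstar| * |ω v y| := by gcongr; exact neg_le_abs _
    _ = |zstar * ω v y| := (abs_mul _ _).symm
    _ ≤ _ := Real.abs_le_sqrt hsq

theorem exists_apply_comp_le (halt : ω.IsAlt) (hzt : 0 < zstar * t) {x' : V}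
    (hx' : ∀ v, C ≤ zstar * z + α x' - zstar * ω v x' + t * tstar + t * α (D v)
      + (t * zstar / 2) * ω (D v) v)
    {M : ℝ} (hM : ∀ v, ω (D v) v ≤ 1 → ω (-x') v ≤ M) :
    ∃ Ma : ℝ, ∀ v, ω (D v) v ≤ 1 → α (D v) ≤ Ma := by
  have ht : t ≠ 0 := right_ne_zero_of_mul hzt.ne'
  have hzt' : 0 < zstar / t := div_pos_iff.mpr (mul_pos_iff.mp hzt)
  refine ⟨√(2 * t * zstar * (zstar * z + α x' + t * tstar - C)) / |t| + zstar / t * M,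
    fun v hv => ?_⟩
  have hP := Real.abs_le_sqrt (sq_sub_le_of_forall_le hzt hx' hv)
  have hvx : ω v x' ≤ M := by
    rw [← halt.neg, ← LinearMap.neg_apply, ← map_neg]; exact hM v hv
  calc α (D v) = (t * α (D v) - zstar * ω v x') / t + zstar / t * ω v x' := by field_simp; ring
    _ ≤ |t * α (D v) - zstar * ω v x'| / |t| + zstar / t * M := by
        rw [← abs_div]
        exact add_le_add (le_abs_self _) (mul_le_mul_of_nonneg_left hvx hzt'.le)
    _ ≤ _ := by gcongr

end LowerBoundedFamily

theorem iomega_uniformly_Q_bounded_general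
    {V : Type*} [AddCommGroup V] [Module ℝ V] [TopologicalSpace V]
    [IsTopologicalAddGroup V] [ContinuousSMul ℝ V]
    (ω : V →ₗ[ℝ] V →ₗ[ℝ] ℝ) (halt : ∀ v : V, ω v v = 0)
    (D : V →ₗ[ℝ] V)
    (α : V →ₗ[ℝ] ℝ) (x : V) (z tstar zstar t : ℝ) (hzt : zstar * t > 0)
    (U : Set V) (hU : U ∈ nhds (0 : V)) (C : ℝ)
    (hbdd : ∀ u ∈ U, ∀ v : V,
      C ≤ zstar * z + α (x + u) - zstar * ω v (x + u) + t * tstar + t * α (D v)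
        + (t * zstar / 2) * ω (D v) v) :
    (∃ U₀ ∈ nhds (0 : V), ∃ M : ℝ, 0 ≤ M ∧
        ∀ y ∈ U₀, ∀ v : V, ω (D v) v ≤ 1 → ω y v ≤ M) ∧
    (∀ y : V, ∃ My : ℝ, ∀ v : V, ω (D v) v ≤ 1 → ω y v ≤ My) ∧
    (∃ Ma : ℝ, ∀ v : V, ω (D v) v ≤ 1 → α (D v) ≤ Ma) := by
  obtain ⟨U₀, hU₀, M, hM, hbound⟩ := exists_nhds_zero_apply_le halt hzt hU hbdd
  have hbounded (y : V) : ∃ My : ℝ, ∀ v : V, ω (D v) v ≤ 1 → ω y v ≤ My :=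
    ω.exists_le_of_le_on_nhds_zero hU₀ (S := {v | ω (D v) v ≤ 1}) hbound y
  obtain ⟨Mx, hMx⟩ := hbounded (-(x + 0))
  exact ⟨⟨U₀, hU₀, M, hM, hbound⟩, hbounded,
    exists_apply_comp_le halt hzt (hbdd 0 (mem_of_mem_nhds hU)) hMx⟩

/-- In the setting of Lemma 2.3(ii): with `Q(v,w) := ω(Dv,w)`, if the quadratic
functions `f_{x'}(v) = z*z + α(x') - z*·ω(v,x') + t·t* + t·α(Dv) + (t·z*/2)·ω(Dv,v)`, for
`x' ∈ x + U`, are uniformly bounded from below, then the functionals `i_y ω = ω(y,·)` are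
uniformly `Q`-bounded for `y` in some neighborhood of `0`; in particular every `i_y ω` is
bounded on the `Q`-unit ball, and so is `D*α = α ∘ D`. -/
theorem iomega_uniformly_Q_bounded
    {V : Type*} [AddCommGroup V] [Module ℝ V] [TopologicalSpace V]
    [IsTopologicalAddGroup V] [ContinuousSMul ℝ V]
    (ω : V →ₗ[ℝ] V →ₗ[ℝ] ℝ) (halt : ∀ v : V, ω v v = 0)
    (hnd : ∀ v : V, (∀ w : V, ω v w = 0) → v = 0)
    (D : V →ₗ[ℝ] V) (hskew : ∀ v w : V, ω (D v) w = -ω v (D w))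
    (α : V →ₗ[ℝ] ℝ) (x : V) (z tstar zstar t : ℝ) (hzt : zstar * t > 0)
    (U : Set V) (hU : U ∈ nhds (0 : V)) (C : ℝ)
    (hbdd : ∀ u ∈ U, ∀ v : V,
      C ≤ zstar * z + α (x + u) - zstar * ω v (x + u) + t * tstar + t * α (D v)
        + (t * zstar / 2) * ω (D v) v) :
    (∃ U₀ ∈ nhds (0 : V), ∃ M : ℝ, 0 ≤ M ∧
        ∀ y ∈ U₀, ∀ v : V, ω (D v) v ≤ 1 → ω y v ≤ M) ∧
    (∀ y : V, ∃ My : ℝ, ∀ v : V, ω (D v) v ≤ 1 → ω y v ≤ My) ∧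
    (∃ Ma : ℝ, ∀ v : V, ω (D v) v ≤ 1 → α (D v) ≤ Ma) :=
  iomega_uniformly_Q_bounded_general ω halt D α x z tstar zstar t hzt U hU C hbdd
end

section
/- (Real version of Stone's Theorem) Let H be a real Hilbert space and γ : ℝ → O(H) a strongly continuous one-parameter group of orthogonal operators (γ(s+t) = γ(s)γ(t), γ(0) = id, each γ(t) a surjective linear isometry, and t ↦ γ(t)v continuous for every v ∈ H). Let D ⊆ H be a dense linear subspace with γ(t)D ⊆ D for all t ∈ ℝ, consisting of C¹-vectors (for each v ∈ D the map t ↦ γ(t)v is continuously differentiable). Define the densely defined unbounded operator A with domain D by A v := (d/dt)|_{t=0} γ(t)v. Then A is essentially skew-adjoint: A is closable and its adjoint A* equals the negative of its closure, A* = −Ā. -/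
/-!
Differentiating `⟪γ t u, γ t v⟫ = ⟪u, v⟫` at `t = 0` shows that `A` is skew-symmetric, hence
closable with `-Ā ≤ A*`. For the reverse inclusion it suffices that `A* ∓ 1` are injective:
if `A* u = c u` with `c ≠ 0`, then `f t = ⟪u, γ t v⟫` solves `f' = c f`, so
`f t = f 0 · exp (c t)`; since `|f| ≤ ‖u‖ ‖v‖`, this forces `⟪u, v⟫ = f 0 = 0` for all `v` in
the dense domain. Injectivity of `A* - 1` makes the range of `1 - A` dense, and skew-symmetry of
`Ā` gives `‖x‖ ≤ ‖x - Ā x‖`, so the range of `1 - Ā` is closed, hence all of `H`. Then for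
`u ∈ dom A*`, solving `x - Ā x = u + A* u` produces `x ∈ dom Ā` with `A* (u - x) = -(u - x)`,
so `u = x ∈ dom Ā`.
-/

open scoped RealInnerProductSpace

namespace LinearPMap

variable {H : Type*} [NormedAddCommGroup H] [InnerProductSpace ℝ H] {T : H →ₗ.[ℝ] H}

def IsSkewSymmetric (T : H →ₗ.[ℝ] H) : Prop :=
  ∀ x y : T.domain, ⟪T x, y⟫ = -⟪(x : H), T y⟫

theorem IsSkewSymmetric.inner_eq_of_mem_closure_graph (hT : T.IsSkewSymmetric) {p q : H × H}
    (hp : p ∈ T.graph.topologicalClosure) (hq : q ∈ T.graph.topologicalClosure) :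
    ⟪p.2, q.1⟫ = -⟪p.1, q.2⟫ := by
  let S : Set ((H × H) × (H × H)) := {r | ⟪r.1.2, r.2.1⟫ = -⟪r.1.1, r.2.2⟫}
  have hgraph : (T.graph : Set (H × H)) ×ˢ (T.graph : Set (H × H)) ⊆ S := by
    rintro ⟨p, q⟩ ⟨hp, hq⟩
    obtain ⟨x, rfl⟩ := T.mem_graph_iff'.1 hp
    obtain ⟨y, rfl⟩ := T.mem_graph_iff'.1 hq
    exact hT x y
  have hS : _root_.IsClosed S := isClosed_eq (by fun_prop) (by fun_prop)
  have hclosure := closure_minimal hgraph hS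
  rw [closure_prod_eq] at hclosure
  exact hclosure (show (p, q) ∈ _ ×ˢ _ from ⟨hp, hq⟩)

theorem IsSkewSymmetric.isClosable (hT : T.IsSkewSymmetric) (hdense : Dense (T.domain : Set H)) :
    T.IsClosable := by
  refine ⟨T.graph.topologicalClosure.toLinearPMap,
    (Submodule.toLinearPMap_graph_eq _ fun p hp hp₁ => ?_).symm⟩
  refine hdense.eq_zero_of_inner_left ℝ fun v hv => ?_
  have := hT.inner_eq_of_mem_closure_graph hp
    (T.graph.le_topologicalClosure (T.mem_graph ⟨v, hv⟩))
  simpa [hp₁] using this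

theorem IsSkewSymmetric.closure (hT : T.IsSkewSymmetric) (hcl : T.IsClosable) :
    T.closure.IsSkewSymmetric := fun x y => by
  have hmem (z : T.closure.domain) : ((z : H), T.closure z) ∈ T.graph.topologicalClosure :=
    hcl.graph_closure_eq_closure_graph ▸ T.closure.mem_graph z
  exact hT.inner_eq_of_mem_closure_graph (hmem x) (hmem y)

theorem IsSkewSymmetric.norm_le_norm_sub_apply (hT : T.IsSkewSymmetric) (x : T.domain) :
    ‖((x : H), T x)‖ ≤ ‖(x : H) - T x‖ := by
  have hx : ⟪(x : H), T x⟫ = 0 := by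
    have := hT x x
    rw [real_inner_comm] at this
    linarith
  have hsq : ‖(x : H) - T x‖ ^ 2 = ‖(x : H)‖ ^ 2 + ‖T x‖ ^ 2 := by
    rw [norm_sub_sq_real, hx]; ring
  rw [Prod.norm_mk]
  apply max_le <;> apply le_of_sq_le_sq _ (norm_nonneg _) <;>
    nlinarith [sq_nonneg ‖T x‖, sq_nonneg ‖(x : H)‖]

variable [CompleteSpace H]

theorem IsSkewSymmetric.isClosed_image_fst_sub_snd_graph (hT : T.IsSkewSymmetric)
    (hclosed : T.IsClosed) : _root_.IsClosed ((fun p : H × H => p.1 - p.2) '' T.graph) := by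
  have : CompleteSpace T.graph := hclosed.completeSpace_coe
  let Φ : T.graph →L[ℝ] H :=
    (ContinuousLinearMap.fst ℝ H H - ContinuousLinearMap.snd ℝ H H).comp T.graph.subtypeL
  have hΦ : AntilipschitzWith 1 Φ := Φ.antilipschitz_of_bound fun p => by
    obtain ⟨⟨_, _⟩, hp⟩ := p
    obtain ⟨x, hx⟩ := T.mem_graph_iff'.1 hp
    cases hx
    rw [NNReal.coe_one, one_mul]
    exact hT.norm_le_norm_sub_apply x
  rw [Set.image_eq_range]
  exact hΦ.isClosed_range Φ.uniformContinuous

theorem dense_image_fst_sub_snd_graph (hdense : Dense (T.domain : Set H))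
    (h₁ : ∀ u : T†.domain, T† u = u → u = 0) :
    Dense ((fun p : H × H => p.1 - p.2) '' T.graph) := by
  let W := T.graph.map (LinearMap.fst ℝ H H - LinearMap.snd ℝ H H)
  refine Submodule.dense_iff_topologicalClosure_eq_top (s := W) |>.2 ?_
  rw [Submodule.topologicalClosure_eq_top_iff, Submodule.eq_bot_iff]
  intro u hu
  have horth (x : T.domain) : ⟪u, (x : H)⟫ = ⟪u, T x⟫ := by
    have := (Submodule.mem_orthogonal' W u).1 hu _ ⟨_, T.mem_graph x, rfl⟩
    simpa [inner_sub_right, sub_eq_zero] using this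
  have hu' : u ∈ T†.domain := mem_adjoint_domain_of_exists _ ⟨u, horth⟩
  simpa using h₁ ⟨u, hu'⟩ (adjoint_apply_eq hdense _ horth)

theorem IsSkewSymmetric.exists_sub_closure_apply_eq (hT : T.IsSkewSymmetric)
    (hdense : Dense (T.domain : Set H)) (h₁ : ∀ u : T†.domain, T† u = u → u = 0) (z : H) :
    ∃ x : T.closure.domain, (x : H) - T.closure x = z := by
  have hcl := hT.isClosable hdense
  have hdense' : Dense ((fun p : H × H => p.1 - p.2) '' T.closure.graph) :=
    (dense_image_fst_sub_snd_graph hdense h₁).mono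
      (Set.image_mono (le_graph_of_le T.le_closure))
  have hz : z ∈ (fun p : H × H => p.1 - p.2) '' T.closure.graph := by
    rw [← ((hT.closure hcl).isClosed_image_fst_sub_snd_graph hcl.closure_isClosed).closure_eq,
      hdense'.closure_eq]
    trivial
  obtain ⟨p, hp, rfl⟩ := hz
  obtain ⟨x, rfl⟩ := T.closure.mem_graph_iff'.1 hp
  exact ⟨x, rfl⟩

theorem IsSkewSymmetric.neg_closure_le_adjoint (hT : T.IsSkewSymmetric)
    (hdense : Dense (T.domain : Set H)) : -T.closure ≤ T† := by
  refine IsFormalAdjoint.le_adjoint hdense fun x y => ?_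
  have := hT.inner_eq_of_mem_closure_graph (T.graph.le_topologicalClosure (T.mem_graph x))
    ((hT.isClosable hdense).graph_closure_eq_closure_graph ▸ T.closure.mem_graph y)
  rw [neg_apply, inner_neg_right]
  exact this

theorem IsSkewSymmetric.adjoint_eq_neg_closure (hT : T.IsSkewSymmetric)
    (hdense : Dense (T.domain : Set H)) (h₁ : ∀ u : T†.domain, T† u = u → u = 0)
    (h₂ : ∀ u : T†.domain, T† u = -u → u = 0) : T† = -T.closure := by
  have hle := hT.neg_closure_le_adjoint hdense
  refine (eq_of_le_of_domain_eq hle (le_antisymm hle.1 fun u hu => ?_)).symm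
  obtain ⟨x, hx⟩ := hT.exists_sub_closure_apply_eq hdense h₁ (u + T† ⟨u, hu⟩)
  let x' : T†.domain := ⟨x, hle.1 x.2⟩
  have hx' : T† x' = -T.closure x := (hle.2 rfl).symm
  have hy : T† (⟨u, hu⟩ - x') = -(⟨u, hu⟩ - x' : T†.domain) := by
    rw [map_sub, hx']
    simp only [Submodule.coe_sub, x']
    linear_combination (norm := module) -hx
  have hux : u = x := congrArg Subtype.val (sub_eq_zero.1 (h₂ _ hy))
  exact hux ▸ x.2

end LinearPMap

theorem eq_zero_of_hasDerivAt_mul_self_of_abs_le {f : ℝ → ℝ} {c M : ℝ} (hc : c ≠ 0)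
    (hf : ∀ t, HasDerivAt f (c * f t) t) (hM : ∀ t, |f t| ≤ M) (t : ℝ) : f t = 0 := by
  have hexp (t : ℝ) : f t = f 0 * Real.exp (c * t) := by
    have hderiv (s : ℝ) : HasDerivAt (fun s => f s * Real.exp (s * -c)) 0 s := by
      have := (hf s).mul (hasDerivAt_mul_const (-c)).exp
      rwa [show c * f s * Real.exp (s * -c) + f s * (Real.exp (s * -c) * -c) = 0 by ring] at this
    have hconst := is_const_of_deriv_eq_zero (fun s => (hderiv s).differentiableAt)
      (fun s => (hderiv s).deriv) t 0
    rw [zero_mul, Real.exp_zero, mul_one] at hconst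
    rw [← hconst, mul_assoc, ← Real.exp_add, show t * -c + c * t = 0 by ring, Real.exp_zero,
      mul_one]
  have hf₀ : f 0 = 0 := by
    by_contra hne
    have hpos : 0 < |f 0| := abs_pos.2 hne
    -- `exp x ≥ x + 1` at `c t = M / |f 0|` pushes `|f t|` past `M`
    have hct : c * (M / |f 0| / c) = M / |f 0| := by field_simp
    have hbound := hM (M / |f 0| / c)
    rw [hexp, abs_mul, Real.abs_exp, hct] at hbound
    have hgrowth := Real.add_one_le_exp (M / |f 0|)
    have : |f 0| * (M / |f 0| + 1) = M + |f 0| := by field_simp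
    nlinarith
  rw [hexp t, hf₀, zero_mul]

section OneParameterGroup

variable {H : Type*} [NormedAddCommGroup H] [InnerProductSpace ℝ H] {γ : ℝ → H →L[ℝ] H}
  {A : H →ₗ.[ℝ] H}

theorem hasDerivAt_orbit (hgrp : ∀ s t : ℝ, γ (s + t) = (γ s).comp (γ t))
    (hinv : ∀ (t : ℝ), ∀ v ∈ A.domain, γ t v ∈ A.domain)
    (hgen : ∀ v : A.domain, HasDerivAt (fun s : ℝ => γ s (v : H)) (A v) 0)
    (v : A.domain) (t : ℝ) :
    HasDerivAt (fun s : ℝ => γ s (v : H)) (A ⟨γ t v, hinv t v v.2⟩) t := by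
  have hshift := HasDerivAt.comp_sub_const t t (by simpa using hgen ⟨γ t v, hinv t v v.2⟩)
  convert hshift using 1
  funext s
  rw [← ContinuousLinearMap.comp_apply, ← hgrp, sub_add_cancel]

theorem isSkewSymmetric_of_hasDerivAt (h0 : γ 0 = ContinuousLinearMap.id ℝ H)
    (hiso : ∀ (t : ℝ) (v : H), ‖γ t v‖ = ‖v‖)
    (hgen : ∀ v : A.domain, HasDerivAt (fun s : ℝ => γ s (v : H)) (A v) 0) :
    A.IsSkewSymmetric := fun u v => by
  have hinner : (fun t => ⟪γ t u, γ t v⟫) = fun _ => ⟪(u : H), v⟫ :=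
    funext fun t => (⟨(γ t).toLinearMap, hiso t⟩ : H →ₗᵢ[ℝ] H).inner_map_map u v
  have hderiv := (hgen u).inner ℝ (hgen v)
  rw [hinner, h0] at hderiv
  have := hderiv.unique (hasDerivAt_const 0 _)
  simp only [ContinuousLinearMap.id_apply] at this
  linarith

theorem eq_zero_of_adjoint_apply_eq_smul [CompleteSpace H]
    (hgrp : ∀ s t : ℝ, γ (s + t) = (γ s).comp (γ t))
    (h0 : γ 0 = ContinuousLinearMap.id ℝ H) (hiso : ∀ (t : ℝ) (v : H), ‖γ t v‖ = ‖v‖)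
    (hdense : Dense (A.domain : Set H)) (hinv : ∀ (t : ℝ), ∀ v ∈ A.domain, γ t v ∈ A.domain)
    (hgen : ∀ v : A.domain, HasDerivAt (fun s : ℝ => γ s (v : H)) (A v) 0)
    {c : ℝ} (hc : c ≠ 0) (u : A.adjoint.domain) (hu : A.adjoint u = c • (u : H)) : u = 0 := by
  refine Subtype.ext (hdense.eq_zero_of_inner_left ℝ fun v hv => ?_)
  lift v to A.domain using hv
  have hode (t : ℝ) : HasDerivAt (fun s => ⟪(u : H), γ s v⟫) (c * ⟪(u : H), γ t v⟫) t := by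
    have := (hasDerivAt_const t (u : H)).inner ℝ (hasDerivAt_orbit hgrp hinv hgen v t)
    rwa [inner_zero_left, add_zero, ← LinearPMap.adjoint_isFormalAdjoint hdense, hu,
      real_inner_smul_left] at this
  have hbound (t : ℝ) : |⟪(u : H), γ t v⟫| ≤ ‖(u : H)‖ * ‖(v : H)‖ := by
    simpa [hiso] using abs_real_inner_le_norm (u : H) (γ t v)
  simpa [h0] using eq_zero_of_hasDerivAt_mul_self_of_abs_le hc hode hbound 0

end OneParameterGroup

theorem real_stone_essentially_skewAdjoint_general
    {H : Type*} [NormedAddCommGroup H] [InnerProductSpace ℝ H] [CompleteSpace H]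
    (γ : ℝ → H →L[ℝ] H)
    (hgrp : ∀ s t : ℝ, γ (s + t) = (γ s).comp (γ t))
    (h0 : γ 0 = ContinuousLinearMap.id ℝ H)
    (hiso : ∀ (t : ℝ) (v : H), ‖γ t v‖ = ‖v‖)
    (A : H →ₗ.[ℝ] H)
    (hdense : Dense (A.domain : Set H))
    (hinv : ∀ (t : ℝ), ∀ v ∈ A.domain, γ t v ∈ A.domain)
    (hC1 : ∀ v ∈ A.domain, ContDiff ℝ 1 fun s : ℝ => γ s v)
    (hA : ∀ v : A.domain, A v = deriv (fun s : ℝ => γ s (v : H)) 0) :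
    A.IsClosable ∧ A.adjoint = -A.closure := by
  have hgen (v : A.domain) : HasDerivAt (fun s : ℝ => γ s (v : H)) (A v) 0 := by
    rw [hA v]
    exact ((hC1 v v.2).differentiable one_ne_zero).differentiableAt.hasDerivAt
  have hskew := isSkewSymmetric_of_hasDerivAt h0 hiso hgen
  have hker {c : ℝ} (hc : c ≠ 0) :=
    eq_zero_of_adjoint_apply_eq_smul hgrp h0 hiso hdense hinv hgen hc
  refine ⟨hskew.isClosable hdense, hskew.adjoint_eq_neg_closure hdense
    (fun u hu => hker one_ne_zero u ?_) (fun u hu => hker (neg_ne_zero.2 one_ne_zero) u ?_)⟩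
  · rw [hu, one_smul]
  · rw [hu, neg_one_smul]

/-- Real version of Stone's Theorem: Let `γ` be a strongly continuous
one-parameter group of orthogonal operators on a real Hilbert space `H`, and let the domain
of the densely defined operator `A` be a dense, `γ(ℝ)`-invariant subspace consisting of
`C¹`-vectors, on which `A v = (d/dt)|₀ γ(t)v`. Then `A` is closable and `A* = -Ā`. -/
theorem real_stone_essentially_skewAdjoint
    {H : Type*} [NormedAddCommGroup H] [InnerProductSpace ℝ H] [CompleteSpace H]
    (γ : ℝ → H →L[ℝ] H)
    (hgrp : ∀ s t : ℝ, γ (s + t) = (γ s).comp (γ t))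
    (h0 : γ 0 = ContinuousLinearMap.id ℝ H)
    (hiso : ∀ (t : ℝ) (v : H), ‖γ t v‖ = ‖v‖)
    (hsurj : ∀ t : ℝ, Function.Surjective (γ t))
    (hcont : ∀ v : H, Continuous fun t : ℝ => γ t v)
    (A : H →ₗ.[ℝ] H)
    (hdense : Dense (A.domain : Set H))
    (hinv : ∀ (t : ℝ), ∀ v ∈ A.domain, γ t v ∈ A.domain)
    (hC1 : ∀ v ∈ A.domain, ContDiff ℝ 1 fun s : ℝ => γ s v)
    (hA : ∀ v : A.domain, A v = deriv (fun s : ℝ => γ s (v : H)) 0) :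
    A.IsClosable ∧ A.adjoint = -A.closure :=
  real_stone_essentially_skewAdjoint_general γ hgrp h0 hiso A hdense hinv hC1 hA
end

section
/- Let H be a complex Hilbert space and γ : ℝ → U(H) a strongly continuous one-parameter group of unitary operators. Let H^∞ denote the set of smooth vectors, i.e. those v ∈ H for which t ↦ γ(t)v is a C^∞ map ℝ → H. Let V ⊆ H^∞ be a real-linear subspace with γ(t)V ⊆ V for all t ∈ ℝ which is dense in H with respect to the Hilbert norm. Then V is dense in H^∞ for the C^∞-topology: for every w ∈ H^∞, every n ∈ ℕ and every ε > 0 there exists v ∈ V such that ‖ (d/dt)^k|_{t=0} γ(t)(w − v) ‖ < ε for all 0 ≤ k ≤ n. -/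
open MeasureTheory Topology Filter Set
open scoped ENNReal NNReal

noncomputable section
namespace SmoothDense

theorem clm_iteratedDeriv {E F : Type*} [NormedAddCommGroup E] [NormedSpace ℝ E]
    [NormedAddCommGroup F] [NormedSpace ℝ F] (A : E →L[ℝ] F) {f : ℝ → E}
    (hf : ContDiff ℝ (⊤ : ℕ∞) f) (k : ℕ) (x : ℝ) :
    iteratedDeriv k (fun t => A (f t)) x = A (iteratedDeriv k f x) := by
  have hi : (k : WithTop ℕ∞) ≤ ((⊤ : ℕ∞) : WithTop ℕ∞) := by exact_mod_cast le_top
  have h := A.iteratedFDeriv_comp_left (hf.contDiffAt (x := x)) hi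
  rw [iteratedDeriv_eq_iteratedFDeriv, iteratedDeriv_eq_iteratedFDeriv]
  show iteratedFDeriv ℝ k (A ∘ f) x (fun _ => 1) = _
  rw [h]; rfl

theorem iteratedDeriv_add' {E : Type*} [NormedAddCommGroup E] [NormedSpace ℝ E]
    {f g : ℝ → E} (hf : ContDiff ℝ (⊤ : ℕ∞) f) (hg : ContDiff ℝ (⊤ : ℕ∞) g) (k : ℕ) (x : ℝ) :
    iteratedDeriv k (fun t => f t + g t) x = iteratedDeriv k f x + iteratedDeriv k g x := by
  have hk : (k : WithTop ℕ∞) ≤ ((⊤ : ℕ∞) : WithTop ℕ∞) := by exact_mod_cast le_top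
  rw [← iteratedDerivWithin_univ, ← iteratedDerivWithin_univ, ← iteratedDerivWithin_univ]
  exact iteratedDerivWithin_add (Set.mem_univ x) uniqueDiffOn_univ
    ((hf.of_le hk).contDiffWithinAt) ((hg.of_le hk).contDiffWithinAt)

theorem iteratedDeriv_sub' {E : Type*} [NormedAddCommGroup E] [NormedSpace ℝ E]
    {f g : ℝ → E} (hf : ContDiff ℝ (⊤ : ℕ∞) f) (hg : ContDiff ℝ (⊤ : ℕ∞) g) (k : ℕ) (x : ℝ) :
    iteratedDeriv k (fun t => f t - g t) x = iteratedDeriv k f x - iteratedDeriv k g x := by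
  have hk : (k : WithTop ℕ∞) ≤ ((⊤ : ℕ∞) : WithTop ℕ∞) := by exact_mod_cast le_top
  rw [← iteratedDerivWithin_univ, ← iteratedDerivWithin_univ, ← iteratedDerivWithin_univ]
  exact iteratedDerivWithin_sub (Set.mem_univ x) uniqueDiffOn_univ
    ((hf.of_le hk).contDiffWithinAt) ((hg.of_le hk).contDiffWithinAt)

def mderiv : ℕ → (ℝ → ℝ) → (ℝ → ℝ)
  | 0, ψ => ψ
  | (k+1), ψ => mderiv k (fun r => -(deriv ψ r))

theorem mderiv_prop : ∀ (k : ℕ) (ψ : ℝ → ℝ), ContDiff ℝ (⊤ : ℕ∞) ψ → HasCompactSupport ψ →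
    ContDiff ℝ (⊤ : ℕ∞) (mderiv k ψ) ∧ HasCompactSupport (mderiv k ψ)
  | 0, _, h, hc => ⟨h, hc⟩
  | (k+1), _, h, hc =>
    mderiv_prop k _ ((contDiff_infty_iff_deriv.mp h).2.neg) (hc.deriv.comp_left neg_zero)

variable {H : Type*} [NormedAddCommGroup H] [NormedSpace ℂ H]
  (γ : ℝ → H →L[ℂ] H)
  (hgrp : ∀ s t : ℝ, γ (s + t) = (γ s).comp (γ t))
  (h0 : γ 0 = ContinuousLinearMap.id ℂ H)
  (hiso : ∀ (t : ℝ) (v : H), ‖γ t v‖ = ‖v‖)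
  (hcont : ∀ v : H, Continuous fun t : ℝ => γ t v)

include hgrp h0 in
theorem orbit_hasDerivAt {u : H} (hu : ContDiff ℝ (⊤ : ℕ∞) fun t : ℝ => γ t u) (t : ℝ) :
    HasDerivAt (fun s : ℝ => γ s u) (γ t (iteratedDeriv 1 (fun s : ℝ => γ s u) 0)) t := by
  have hdiff : DifferentiableAt ℝ (fun s : ℝ => γ s u) 0 :=
    (hu.differentiable (by simp)).differentiableAt
  have h₀ : HasDerivAt (fun s : ℝ => γ s u) (iteratedDeriv 1 (fun s : ℝ => γ s u) 0) (t - t) := by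
    rw [iteratedDeriv_one, sub_self]; exact hdiff.hasDerivAt
  have h₁ : HasDerivAt (fun s : ℝ => γ (s - t) u) (iteratedDeriv 1 (fun s : ℝ => γ s u) 0) t :=
    HasDerivAt.comp_sub_const t t h₀
  have h₂ := ((γ t).restrictScalars ℝ).hasFDerivAt.comp_hasDerivAt t h₁
  have key : (fun s : ℝ => ((γ t).restrictScalars ℝ) (γ (s - t) u)) = fun s : ℝ => γ s u := by
    funext s
    have h3 : γ t (γ (s - t) u) = γ (t + (s - t)) u := by rw [hgrp]; rfl
    show γ t (γ (s - t) u) = γ s u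
    rw [h3, add_sub_cancel]
  exact h₂.congr_of_eventuallyEq (Filter.Eventually.of_forall fun s => (congrFun key s).symm)

include hgrp h0 in
theorem orbit_iteratedDeriv {u : H} (hu : ContDiff ℝ (⊤ : ℕ∞) fun t : ℝ => γ t u) (k : ℕ) :
    (ContDiff ℝ (⊤ : ℕ∞) fun t : ℝ => γ t (iteratedDeriv k (fun s : ℝ => γ s u) 0)) ∧
    (iteratedDeriv k (fun s : ℝ => γ s u)
      = fun t => γ t (iteratedDeriv k (fun s : ℝ => γ s u) 0)) := by
  induction k with
  | zero =>
    constructor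
    · simpa [h0] using hu
    · funext t; simp [h0]
  | succ k ih =>
    obtain ⟨hsm, heq⟩ := ih
    set x := iteratedDeriv k (fun s : ℝ => γ s u) 0 with hx
    have hD := orbit_hasDerivAt γ hgrp h0 hsm
    have heq' : iteratedDeriv (k+1) (fun s : ℝ => γ s u)
        = fun t => γ t (iteratedDeriv 1 (fun s : ℝ => γ s x) 0) := by
      rw [iteratedDeriv_succ, heq]
      funext t; exact (hD t).deriv
    have hval : iteratedDeriv (k+1) (fun s : ℝ => γ s u) 0
        = iteratedDeriv 1 (fun s : ℝ => γ s x) 0 := by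
      rw [heq']; simp [h0]
    constructor
    · have h4 : (fun t : ℝ => γ t (iteratedDeriv (k+1) (fun s : ℝ => γ s u) 0))
          = iteratedDeriv (k+1) (fun s : ℝ => γ s u) := by
        funext t
        rw [heq']
        simp [h0]
      rw [h4, iteratedDeriv_eq_iterate]
      exact hu.iterate_deriv (k+1)
    · funext t
      rw [heq']
      simp [h0]

variable [CompleteSpace H]

include hcont in
theorem conv_integrable {ψ : ℝ → ℝ} (hψ : Continuous ψ) (hψc : HasCompactSupport ψ)
    (u : H) (s : ℝ) : Integrable (fun t : ℝ => ψ (t - s) • γ t u) volume := by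
  apply Continuous.integrable_of_hasCompactSupport
  · exact (hψ.comp (continuous_id.sub continuous_const)).smul (hcont u)
  · exact (hψc.comp_isClosedEmbedding (Homeomorph.subRight s).isClosedEmbedding).smul_right

include hiso hcont in
theorem conv_hasDerivAt {ψ : ℝ → ℝ} (hψ : ContDiff ℝ (⊤ : ℕ∞) ψ) (hψc : HasCompactSupport ψ)
    (u : H) (s : ℝ) :
    HasDerivAt (fun x : ℝ => ∫ t : ℝ, ψ (t - x) • γ t u)
      (∫ t : ℝ, (-(deriv ψ (t - s))) • γ t u) s := by
  have hψ' : Continuous (deriv ψ) := (contDiff_infty_iff_deriv.mp hψ).2.continuous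
  obtain ⟨R, hRsupp⟩ := (hψc.deriv).isCompact.isBounded.subset_closedBall 0
  obtain ⟨C, hC⟩ := hψ'.bounded_above_of_compact_support hψc.deriv
  have key := hasDerivAt_integral_of_dominated_loc_of_deriv_le (μ := volume)
    (x₀ := s) (F := fun x t => ψ (t - x) • γ t u)
    (F' := fun x t => (-(deriv ψ (t - x))) • γ t u)
    (bound := (Metric.closedBall s (R + 1)).indicator fun _ => C * ‖u‖)
    (Metric.ball_mem_nhds s one_pos)
    (Eventually.of_forall fun x =>
      (((hψ.continuous.comp (continuous_id.sub continuous_const)).smul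
        (hcont u))).aestronglyMeasurable)
    (conv_integrable γ hcont hψ.continuous hψc u s)
    (((hψ'.comp (continuous_id.sub continuous_const)).neg.smul (hcont u)).aestronglyMeasurable)
    ?_ ?_ ?_
  · exact key.2
  · refine Eventually.of_forall fun t => fun x hx => ?_
    rw [norm_smul, hiso t u]
    by_cases ht : t ∈ Metric.closedBall s (R + 1)
    · rw [Set.indicator_of_mem ht]
      have h1 : ‖-(deriv ψ (t - x))‖ ≤ C := by
        rw [norm_neg]; exact hC (t - x)
      exact mul_le_mul_of_nonneg_right h1 (norm_nonneg u)
    · rw [Set.indicator_of_notMem ht]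
      have hz : deriv ψ (t - x) = 0 := by
        by_contra hne
        have h2 : t - x ∈ Metric.closedBall (0:ℝ) R :=
          hRsupp (subset_tsupport _ hne)
        apply ht
        rw [Metric.mem_closedBall] at h2 ⊢
        have h3 : dist t s ≤ dist t x + dist x s := dist_triangle t x s
        have h4 : dist t x ≤ R := by
          rw [Real.dist_eq]
          simpa [Real.dist_eq] using h2
        have h5 : dist x s ≤ 1 := le_of_lt (Metric.mem_ball.mp hx)
        linarith
      simp [hz]
  · rw [integrable_indicator_iff measurableSet_closedBall]
    apply (integrableOn_const_iff).mpr
    exact Or.inr (measure_closedBall_lt_top)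
  · refine Eventually.of_forall fun t => fun x _ => ?_
    have hd : HasDerivAt ψ (deriv ψ (t - x)) (t - x) :=
      ((hψ.differentiable (by simp)) (t - x)).hasDerivAt
    exact (hd.comp_const_sub t x).smul_const (γ t u)

include hiso hcont in
theorem conv_contDiff (u : H) : ∀ (k : ℕ) (ψ : ℝ → ℝ), ContDiff ℝ (⊤ : ℕ∞) ψ →
    HasCompactSupport ψ →
    ContDiff ℝ (k : ℕ) (fun x : ℝ => ∫ t : ℝ, ψ (t - x) • γ t u) := by
  intro k
  induction k with
  | zero =>
    intro ψ hψ hψc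
    rw [Nat.cast_zero, contDiff_zero]
    exact continuous_iff_continuousAt.mpr fun x =>
      (conv_hasDerivAt γ hiso hcont hψ hψc u x).differentiableAt.continuousAt
  | succ k ih =>
    intro ψ hψ hψc
    have hd := fun x => conv_hasDerivAt γ hiso hcont hψ hψc u x
    have hcast : ((k+1 : ℕ) : WithTop ℕ∞) = (k : ℕ) + 1 := by push_cast; rfl
    rw [hcast, contDiff_succ_iff_deriv]
    refine ⟨fun x => (hd x).differentiableAt, ?_, ?_⟩
    · intro h
      exact absurd h (by simp)
    · have hde : deriv (fun x : ℝ => ∫ t : ℝ, ψ (t - x) • γ t u)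
          = fun x => ∫ t : ℝ, (-(deriv ψ (t - x))) • γ t u := funext fun x => (hd x).deriv
      rw [hde]
      exact ih _ ((contDiff_infty_iff_deriv.mp hψ).2.neg) (hψc.deriv.comp_left neg_zero)

include hiso hcont in
theorem conv_iteratedDeriv (u : H) : ∀ (k : ℕ) (ψ : ℝ → ℝ), ContDiff ℝ (⊤ : ℕ∞) ψ →
    HasCompactSupport ψ →
    iteratedDeriv k (fun x : ℝ => ∫ t : ℝ, ψ (t - x) • γ t u)
      = fun x : ℝ => ∫ t : ℝ, (mderiv k ψ) (t - x) • γ t u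
  | 0, ψ, _, _ => by rw [iteratedDeriv_zero]; rfl
  | (k+1), ψ, hψ, hψc => by
    rw [iteratedDeriv_succ']
    have hde : deriv (fun x : ℝ => ∫ t : ℝ, ψ (t - x) • γ t u)
        = fun x => ∫ t : ℝ, (-(deriv ψ (t - x))) • γ t u :=
      funext fun x => (conv_hasDerivAt γ hiso hcont hψ hψc u x).deriv
    rw [hde]
    exact conv_iteratedDeriv u k _ ((contDiff_infty_iff_deriv.mp hψ).2.neg)
      (hψc.deriv.comp_left neg_zero)

end SmoothDense
end

/-- Let `γ` be a strongly continuous one-parameter unitary group on a complex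
Hilbert space `H`. If `V` is a `γ(ℝ)`-invariant real subspace of smooth vectors which is dense
in `H` for the Hilbert norm, then `V` is dense in the space of smooth vectors for the
`C^∞`-topology: for each smooth vector `w`, each `n` and each `ε > 0` there is `v ∈ V` with
`‖(d/dt)^k|₀ γ(t)(w - v)‖ < ε` for all `k ≤ n`. -/
theorem smooth_vectors_dense_in_Cinfty_topology
    {H : Type*} [NormedAddCommGroup H] [InnerProductSpace ℂ H] [CompleteSpace H]
    (γ : ℝ → H →L[ℂ] H)
    (hgrp : ∀ s t : ℝ, γ (s + t) = (γ s).comp (γ t))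
    (h0 : γ 0 = ContinuousLinearMap.id ℂ H)
    (hiso : ∀ (t : ℝ) (v : H), ‖γ t v‖ = ‖v‖)
    (hcont : ∀ v : H, Continuous fun t : ℝ => γ t v)
    (V : Submodule ℝ H)
    (hVsmooth : ∀ v ∈ V, ContDiff ℝ (⊤ : ℕ∞) fun t : ℝ => γ t v)
    (hVinv : ∀ (t : ℝ), ∀ v ∈ V, γ t v ∈ V)
    (hVdense : Dense (V : Set H)) :
    ∀ w : H, (ContDiff ℝ (⊤ : ℕ∞) fun t : ℝ => γ t w) → ∀ n : ℕ, ∀ ε : ℝ, 0 < ε →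
      ∃ v ∈ V, ∀ k ≤ n, ‖iteratedDeriv k (fun t : ℝ => γ t (w - v)) 0‖ < ε := by
  classical
  intro w hw n ε hε
  have hwS : ContDiff ℝ (⊤ : ℕ∞) fun t : ℝ => γ t w := hw.of_le (by simp)
  -- Step 1: modulus of continuity for the derivatives of w at 0
  have hδk : ∀ k : ℕ, ∃ δ : ℝ, 0 < δ ∧ ∀ t : ℝ, |t| < δ →
      ‖γ t (iteratedDeriv k (fun s : ℝ => γ s w) 0) - iteratedDeriv k (fun s : ℝ => γ s w) 0‖
        ≤ ε/6 := by
    intro k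
    set x := iteratedDeriv k (fun s : ℝ => γ s w) 0 with hxdef
    have hc : ContinuousAt (fun t : ℝ => γ t x) 0 := (hcont x).continuousAt
    rw [Metric.continuousAt_iff] at hc
    obtain ⟨δ, hδ0, hδ⟩ := hc (ε/6) (by positivity)
    refine ⟨δ, hδ0, fun t ht => ?_⟩
    have h1 := hδ (show dist t 0 < δ by simpa [Real.dist_eq] using ht)
    rw [dist_eq_norm] at h1
    have h2 : γ (0:ℝ) x = x := by rw [h0]; rfl
    rw [h2] at h1
    exact le_of_lt h1
  choose δf hδf0 hδfb using hδk
  set δ : ℝ := (Finset.range (n+1)).inf' ⟨0, by simp⟩ δf with hδdef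
  have hδ0 : 0 < δ := (Finset.lt_inf'_iff _).mpr fun i _ => hδf0 i
  have hδle : ∀ k, k ≤ n → ∀ t : ℝ, |t| < δ →
      ‖γ t (iteratedDeriv k (fun s : ℝ => γ s w) 0) - iteratedDeriv k (fun s : ℝ => γ s w) 0‖
        ≤ ε/6 := fun k hk t ht =>
    hδfb k t (lt_of_lt_of_le ht (Finset.inf'_le _ (Finset.mem_range.mpr (Nat.lt_succ_of_le hk))))
  -- Step 2: bump function
  set bump : ContDiffBump (0:ℝ) := ⟨δ/2, δ, by positivity, by linarith⟩ with hbump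
  set φ : ℝ → ℝ := bump.normed volume with hφdef
  have hφsm : ContDiff ℝ (⊤ : ℕ∞) φ := bump.contDiff_normed
  have hφc : HasCompactSupport φ := bump.hasCompactSupport_normed
  have hφ0 : ∀ t, 0 ≤ φ t := fun t => bump.nonneg_normed t
  have hφ1 : ∫ t : ℝ, φ t = 1 := bump.integral_normed
  have hφint : Integrable φ volume := hφsm.continuous.integrable_of_hasCompactSupport hφc
  have hφsupp : ∀ t : ℝ, φ t ≠ 0 → |t| < δ := by
    intro t ht
    have h1 : t ∈ Function.support φ := ht
    rw [hφdef, bump.support_normed_eq] at h1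
    simpa [Real.dist_eq] using Metric.mem_ball.mp h1
  -- Step 3: constants
  set C : ℝ := 1 + ∑ k ∈ Finset.range (n+1), ∫ t : ℝ, |SmoothDense.mderiv k φ t| with hCdef
  have hCk : ∀ k, k ≤ n → (∫ t : ℝ, |SmoothDense.mderiv k φ t|) ≤ C := by
    intro k hk
    have h1 : ∀ j ∈ Finset.range (n+1), 0 ≤ ∫ t : ℝ, |SmoothDense.mderiv j φ t| :=
      fun j _ => integral_nonneg fun t => abs_nonneg _
    have h2 := Finset.single_le_sum h1 (Finset.mem_range.mpr (Nat.lt_succ_of_le hk))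
    rw [hCdef]
    linarith
  have hC0 : 0 < C := by
    have h1 : (0:ℝ) ≤ ∑ k ∈ Finset.range (n+1), ∫ t : ℝ, |SmoothDense.mderiv k φ t| :=
      Finset.sum_nonneg fun j _ => integral_nonneg fun t => abs_nonneg _
    rw [hCdef]; linarith
  -- Step 4: choose v close to w
  obtain ⟨v, hvV, hvdist⟩ := hVdense.exists_dist_lt w (show (0:ℝ) < ε/(3*C) by positivity)
  rw [dist_eq_norm] at hvdist
  have hvS : ContDiff ℝ (⊤ : ℕ∞) fun t : ℝ => γ t v := (hVsmooth v hvV).of_le (by simp)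
  -- Step 5: integrability and the smoothing operator L
  have hint : ∀ u : H, Integrable (fun t : ℝ => φ t • γ t u) volume := by
    intro u
    have h1 := SmoothDense.conv_integrable γ hcont hφsm.continuous hφc u 0
    simpa using h1
  have hnormle : ∀ (ψ : ℝ → ℝ) (u : H), ‖∫ t : ℝ, ψ t • γ t u‖ ≤ (∫ t : ℝ, |ψ t|) * ‖u‖ := by
    intro ψ u
    calc ‖∫ t : ℝ, ψ t • γ t u‖ ≤ ∫ t : ℝ, ‖ψ t • γ t u‖ := norm_integral_le_integral_norm _
    _ = ∫ t : ℝ, |ψ t| * ‖u‖ := by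
        congr 1; funext t; rw [norm_smul, hiso, Real.norm_eq_abs]
    _ = (∫ t : ℝ, |ψ t|) * ‖u‖ := integral_mul_const _ _
  set L : H →L[ℝ] H := LinearMap.mkContinuous
    { toFun := fun u => ∫ t : ℝ, φ t • γ t u
      map_add' := fun a b => by
        show (∫ t : ℝ, φ t • γ t (a + b)) = (∫ t : ℝ, φ t • γ t a) + ∫ t : ℝ, φ t • γ t b
        rw [← integral_add (hint a) (hint b)]
        congr 1; funext t
        rw [map_add, smul_add]
      map_smul' := fun c a => by
        simp only [RingHom.id_apply]
        show (∫ t : ℝ, φ t • γ t (c • a)) = c • ∫ t : ℝ, φ t • γ t a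
        rw [← integral_smul]
        congr 1; funext t
        rw [(γ t).map_smul_of_tower, smul_comm] }
    (∫ t : ℝ, |φ t|) (fun u => hnormle φ u) with hLdef
  have hLapp : ∀ u : H, L u = ∫ t : ℝ, φ t • γ t u := fun u => rfl
  -- Step 6: orbit identities for L
  have hmid : ∀ (u : H) (s : ℝ), γ s (L u) = ∫ t : ℝ, φ t • γ (t + s) u := by
    intro u s
    rw [hLapp]
    have h1 : γ s (∫ t : ℝ, φ t • γ t u) = ∫ t : ℝ, γ s (φ t • γ t u) :=
      (ContinuousLinearMap.integral_comp_comm ((γ s).restrictScalars ℝ) (hint u)).symm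
    rw [h1]
    congr 1; funext t
    rw [(γ s).map_smul_of_tower]
    congr 1
    have h2 : γ (s + t) u = γ s (γ t u) := by rw [hgrp]; rfl
    rw [← h2, add_comm]
  have hLorb : ∀ u : H, (fun s : ℝ => γ s (L u)) = fun s : ℝ => ∫ t : ℝ, φ (t - s) • γ t u := by
    intro u
    funext s
    rw [hmid u s]
    have h3 := MeasureTheory.integral_add_right_eq_self (μ := volume)
      (fun t : ℝ => φ (t - s) • γ t u) s
    simp only [add_sub_cancel_right] at h3
    exact h3
  have hLcomm : ∀ (u : H) (s : ℝ), γ s (L u) = L (γ s u) := by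
    intro u s
    rw [hmid u s, hLapp (γ s u)]
    congr 1; funext t
    congr 1
    rw [hgrp]; rfl
  -- Step 7: smoothness of orbits of L u
  have hLsm : ∀ u : H, ContDiff ℝ (⊤ : ℕ∞) fun s : ℝ => γ s (L u) := by
    intro u
    rw [hLorb u]
    rw [show ((⊤ : ℕ∞) : WithTop ℕ∞) = (⊤ : ℕ∞) from rfl]
    rw [contDiff_infty]
    exact fun k => SmoothDense.conv_contDiff γ hiso hcont u k φ hφsm hφc
  -- Step 8: derivative formulas for L
  have hDL : ∀ (k : ℕ) (u : H), iteratedDeriv k (fun s : ℝ => γ s (L u)) 0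
      = ∫ t : ℝ, SmoothDense.mderiv k φ t • γ t u := by
    intro k u
    rw [hLorb u, SmoothDense.conv_iteratedDeriv γ hiso hcont u k φ hφsm hφc]
    simp only [sub_zero]
  have hDLsmooth : ∀ (u : H), (ContDiff ℝ (⊤ : ℕ∞) fun t : ℝ => γ t u) → ∀ k : ℕ,
      iteratedDeriv k (fun s : ℝ => γ s (L u)) 0
        = L (iteratedDeriv k (fun s : ℝ => γ s u) 0) := by
    intro u hu k
    have h1 : (fun s : ℝ => γ s (L u)) = fun s : ℝ => L (γ s u) :=
      funext fun s => hLcomm u s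
    rw [h1]
    exact SmoothDense.clm_iteratedDeriv L hu k 0
  -- Estimate 1 : ‖D_k w - D_k (L w)‖ ≤ ε/6
  have hest1 : ∀ k, k ≤ n →
      ‖iteratedDeriv k (fun s : ℝ => γ s w) 0 - iteratedDeriv k (fun s : ℝ => γ s (L w)) 0‖
        ≤ ε/6 := by
    intro k hk
    rw [hDLsmooth w hwS k, hLapp]
    set x := iteratedDeriv k (fun s : ℝ => γ s w) 0 with hxdef
    have hx1 : x = ∫ t : ℝ, φ t • x := by rw [integral_smul_const, hφ1, one_smul]
    have hsub : x - (∫ t : ℝ, φ t • γ t x) = ∫ t : ℝ, φ t • (x - γ t x) := by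
      have h4 : (fun t : ℝ => φ t • (x - γ t x)) = fun t : ℝ => φ t • x - φ t • γ t x := by
        funext t; rw [smul_sub]
      rw [h4, integral_sub (hφint.smul_const x) (hint x), ← hx1]
    rw [hsub]
    have hptwise : ∀ t : ℝ, ‖φ t • (x - γ t x)‖ ≤ φ t * (ε/6) := by
      intro t
      rw [norm_smul, Real.norm_eq_abs, abs_of_nonneg (hφ0 t)]
      by_cases hz : φ t = 0
      · simp [hz]
      · have h1 : |t| < δ := hφsupp t hz
        have h2 := hδle k hk t h1
        rw [norm_sub_rev]
        exact mul_le_mul_of_nonneg_left h2 (hφ0 t)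
    calc ‖∫ t : ℝ, φ t • (x - γ t x)‖ ≤ ∫ t : ℝ, φ t * (ε/6) :=
          norm_integral_le_of_norm_le (hφint.mul_const _) (ae_of_all _ hptwise)
    _ = ε/6 := by rw [integral_mul_const, hφ1, one_mul]
  -- Estimate 2 : ‖D_k (L (w - v))‖ < ε/3
  have hest2 : ∀ k, k ≤ n → ‖iteratedDeriv k (fun s : ℝ => γ s (L (w - v))) 0‖ < ε/3 := by
    intro k hk
    rw [hDL k (w - v)]
    calc ‖∫ t : ℝ, SmoothDense.mderiv k φ t • γ t (w - v)‖
        ≤ (∫ t : ℝ, |SmoothDense.mderiv k φ t|) * ‖w - v‖ := hnormle _ _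
    _ ≤ C * ‖w - v‖ := mul_le_mul_of_nonneg_right (hCk k hk) (norm_nonneg _)
    _ < C * (ε/(3*C)) := by exact mul_lt_mul_of_pos_left hvdist hC0
    _ = ε/3 := by field_simp
  -- Estimate 3 : approximate L v by an element of V
  set g : ℝ → (Fin (n+1) → H) :=
    fun t k => γ t (iteratedDeriv (k : ℕ) (fun s : ℝ => γ s v) 0) with hgdef
  set f : ℝ → NNReal := fun t => Real.toNNReal (φ t) with hfdef
  have hfmeas : Measurable f := (continuous_real_toNNReal.comp hφsm.continuous).measurable
  set μ : Measure ℝ := volume.withDensity (fun t => (f t : ENNReal)) with hμdef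
  have hprob : IsProbabilityMeasure μ := by
    constructor
    rw [hμdef, withDensity_apply _ MeasurableSet.univ, setLIntegral_univ]
    have h1 : (fun t : ℝ => ((f t : ℝ≥0) : ℝ≥0∞)) = fun t => ENNReal.ofReal (φ t) := rfl
    rw [h1, ← ofReal_integral_eq_lintegral_ofReal hφint (ae_of_all _ hφ0), hφ1,
      ENNReal.ofReal_one]
  haveI := hprob
  have hgcont : Continuous g := continuous_pi fun k => hcont _
  have hgb : ∀ t : ℝ, ‖g t‖ ≤ ‖g 0‖ := by
    intro t
    apply (pi_norm_le_iff_of_nonneg (norm_nonneg (g 0))).mpr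
    intro k
    calc ‖g t k‖ = ‖iteratedDeriv (k : ℕ) (fun s : ℝ => γ s v) 0‖ := hiso _ _
    _ = ‖g 0 k‖ := (hiso _ _).symm
    _ ≤ ‖g 0‖ := norm_le_pi_norm (g 0) k
  haveI : SecondCountableTopologyEither ℝ (Fin (n + 1) → H) :=
    ⟨Or.inl inferInstance⟩
  have hgint : Integrable g μ :=
    Integrable.mono' (integrable_const ‖g 0‖) hgcont.aestronglyMeasurable (ae_of_all _ hgb)
  have hmem := ((convex_convexHull ℝ (Set.range g)).closure).integral_mem isClosed_closure
    (ae_of_all _ fun t => subset_closure (subset_convexHull ℝ _ (Set.mem_range_self t))) hgint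
  have hcompint : ∀ k : Fin (n+1),
      (∫ t, g t ∂μ) k = iteratedDeriv (k : ℕ) (fun s : ℝ => γ s (L v)) 0 := by
    intro k
    have h1 : (∫ t, g t ∂μ) k = ∫ t, g t k ∂μ :=
      ((ContinuousLinearMap.proj (R := ℝ) (φ := fun _ : Fin (n+1) => H) k).integral_comp_comm
        hgint).symm
    have h2 : ∫ t, g t k ∂μ = ∫ t : ℝ, f t • g t k := by
      rw [hμdef]
      exact integral_withDensity_eq_integral_smul hfmeas _
    have h3 : (fun t : ℝ => f t • g t k)
        = fun t : ℝ => φ t • γ t (iteratedDeriv (k : ℕ) (fun s : ℝ => γ s v) 0) := by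
      funext t
      rw [hfdef]
      rw [NNReal.smul_def, Real.coe_toNNReal _ (hφ0 t)]
    rw [h1, h2, h3, hDLsmooth v hvS (k : ℕ), hLapp]
  obtain ⟨y, hyhull, hydist⟩ : ∃ y ∈ convexHull ℝ (Set.range g), dist (∫ t, g t ∂μ) y < ε/3 := by
    have h1 := Metric.mem_closure_iff.mp hmem (ε/3) (by positivity)
    simpa using h1
  rw [convexHull_eq] at hyhull
  obtain ⟨ι, T, c, z, hc0, hc1, hzmem, hcm⟩ := hyhull
  have hzr : ∀ i ∈ T, ∃ r : ℝ, g r = z i := fun i hi => Set.mem_range.mp (hzmem i hi)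
  choose! τ hτ using hzr
  set S : H := ∑ i ∈ T, c i • γ (τ i) v with hSdef
  have hSV : S ∈ V := Submodule.sum_mem V fun i _ => Submodule.smul_mem V _ (hVinv (τ i) v hvV)
  have hSSm : ContDiff ℝ (⊤ : ℕ∞) fun t : ℝ => γ t S := (hVsmooth S hSV).of_le (by simp)
  set M : H →L[ℝ] H := ∑ i ∈ T, c i • ((γ (τ i)).restrictScalars ℝ) with hMdef
  have horbS : (fun s : ℝ => γ s S) = fun s : ℝ => M (γ s v) := by
    funext s
    rw [hSdef, map_sum, hMdef, ContinuousLinearMap.sum_apply]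
    apply Finset.sum_congr rfl
    intro i _
    rw [ContinuousLinearMap.smul_apply, ContinuousLinearMap.coe_restrictScalars']
    rw [(γ s).map_smul_of_tower]
    congr 1
    have e1 : γ s (γ (τ i) v) = γ (s + τ i) v := by rw [hgrp]; rfl
    have e2 : γ (τ i) (γ s v) = γ (τ i + s) v := by rw [hgrp]; rfl
    rw [e1, e2, add_comm]
  have hDS : ∀ k : ℕ, iteratedDeriv k (fun s : ℝ => γ s S) 0
      = ∑ i ∈ T, c i • γ (τ i) (iteratedDeriv k (fun s : ℝ => γ s v) 0) := by
    intro k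
    rw [horbS, SmoothDense.clm_iteratedDeriv M hvS k 0, hMdef]
    simp [ContinuousLinearMap.sum_apply]
  have hy : ∀ k : Fin (n+1),
      y k = ∑ i ∈ T, c i • γ (τ i) (iteratedDeriv (k : ℕ) (fun s : ℝ => γ s v) 0) := by
    intro k
    rw [← hcm, Finset.centerMass_eq_of_sum_1 _ _ hc1, Finset.sum_apply]
    apply Finset.sum_congr rfl
    intro i hi
    rw [Pi.smul_apply, ← hτ i hi]
  have hest3 : ∀ k, k ≤ n →
      ‖iteratedDeriv k (fun s : ℝ => γ s (L v)) 0 - iteratedDeriv k (fun s : ℝ => γ s S) 0‖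
        < ε/3 := by
    intro k hk
    have hkfin : k < n+1 := Nat.lt_succ_of_le hk
    have h1 : iteratedDeriv k (fun s : ℝ => γ s (L v)) 0 = (∫ t, g t ∂μ) ⟨k, hkfin⟩ :=
      (hcompint ⟨k, hkfin⟩).symm
    have h2 : iteratedDeriv k (fun s : ℝ => γ s S) 0 = y ⟨k, hkfin⟩ := by
      rw [hDS k, hy ⟨k, hkfin⟩]
    rw [h1, h2]
    calc ‖(∫ t, g t ∂μ) ⟨k, hkfin⟩ - y ⟨k, hkfin⟩‖
        = ‖((∫ t, g t ∂μ) - y) ⟨k, hkfin⟩‖ := by rw [Pi.sub_apply]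
    _ ≤ ‖(∫ t, g t ∂μ) - y‖ := norm_le_pi_norm _ _
    _ < ε/3 := by rw [← dist_eq_norm]; exact hydist
  -- Final assembly
  refine ⟨S, hSV, ?_⟩
  intro k hk
  have hsmLw : ContDiff ℝ (⊤ : ℕ∞) fun t : ℝ => γ t (L w) := hLsm w
  have hsmLwv : ContDiff ℝ (⊤ : ℕ∞) fun t : ℝ => γ t (L (w - v)) := hLsm (w - v)
  have hsmLv : ContDiff ℝ (⊤ : ℕ∞) fun t : ℝ => γ t (L v) := hLsm v
  have horb_sub : ∀ a b : H, (fun t : ℝ => γ t (a - b)) = fun t : ℝ => γ t a - γ t b := by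
    intro a b; funext t; rw [map_sub]
  have horb_add : ∀ a b : H, (fun t : ℝ => γ t (a + b)) = fun t : ℝ => γ t a + γ t b := by
    intro a b; funext t; rw [map_add]
  have h1 : ContDiff ℝ (⊤ : ℕ∞) fun t : ℝ => γ t (w - L w) := by
    rw [horb_sub]; exact hwS.sub hsmLw
  have h2 : ContDiff ℝ (⊤ : ℕ∞) fun t : ℝ => γ t ((w - L w) + L (w - v)) := by
    rw [horb_add]; exact h1.add hsmLwv
  have h3 : ContDiff ℝ (⊤ : ℕ∞) fun t : ℝ => γ t (L v - S) := by
    rw [horb_sub]; exact hsmLv.sub hSSm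
  have hdecomp : w - S = ((w - L w) + L (w - v)) + (L v - S) := by
    rw [map_sub]
    abel
  have hDdecomp : iteratedDeriv k (fun t : ℝ => γ t (w - S)) 0
      = (iteratedDeriv k (fun t : ℝ => γ t (w - L w)) 0
          + iteratedDeriv k (fun t : ℝ => γ t (L (w - v))) 0)
        + iteratedDeriv k (fun t : ℝ => γ t (L v - S)) 0 := by
    rw [hdecomp]
    rw [horb_add ((w - L w) + L (w - v)) (L v - S)]
    rw [SmoothDense.iteratedDeriv_add' h2 h3 k 0]
    congr 1
    rw [horb_add (w - L w) (L (w - v))]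
    rw [SmoothDense.iteratedDeriv_add' h1 hsmLwv k 0]
  have b1 : ‖iteratedDeriv k (fun t : ℝ => γ t (w - L w)) 0‖ < ε/3 := by
    rw [horb_sub, SmoothDense.iteratedDeriv_sub' hwS hsmLw k 0]
    have := hest1 k hk
    linarith
  have b2 := hest2 k hk
  have b3 : ‖iteratedDeriv k (fun t : ℝ => γ t (L v - S)) 0‖ < ε/3 := by
    rw [horb_sub, SmoothDense.iteratedDeriv_sub' hsmLv hSSm k 0]
    exact hest3 k hk
  rw [hDdecomp]
  calc ‖(iteratedDeriv k (fun t : ℝ => γ t (w - L w)) 0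
          + iteratedDeriv k (fun t : ℝ => γ t (L (w - v))) 0)
        + iteratedDeriv k (fun t : ℝ => γ t (L v - S)) 0‖
      ≤ ‖iteratedDeriv k (fun t : ℝ => γ t (w - L w)) 0
          + iteratedDeriv k (fun t : ℝ => γ t (L (w - v))) 0‖
        + ‖iteratedDeriv k (fun t : ℝ => γ t (L v - S)) 0‖ := norm_add_le _ _
  _ ≤ (‖iteratedDeriv k (fun t : ℝ => γ t (w - L w)) 0‖
        + ‖iteratedDeriv k (fun t : ℝ => γ t (L (w - v))) 0‖)
        + ‖iteratedDeriv k (fun t : ℝ => γ t (L v - S)) 0‖ := by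
      have := norm_add_le (iteratedDeriv k (fun t : ℝ => γ t (w - L w)) 0)
        (iteratedDeriv k (fun t : ℝ => γ t (L (w - v))) 0)
      linarith
  _ < ε := by linarith
end

section
/- Let V be a real vector space, κ a symmetric bilinear form on V, and D : V → V a linear map that is κ-skew-symmetric, i.e. κ(Dx,y) = −κ(x,Dy) for all x,y ∈ V. On g := ℝ × V × ℝ define the bracket [(z,v,t),(z′,v′,t′)] := (κ(Dv,v′), t·Dv′ − t′·Dv, 0) and the symmetric bilinear form κ_g((z,x,t),(z′,x′,t′)) := z·t′ + z′·t + κ(x,x′). Then κ_g is invariant under the bracket: κ_g([a,b],c) + κ_g(b,[a,c]) = 0 for all a,b,c ∈ g. -/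
/-- The bracket of the double extension `g(V,κ,D) = ℝ × V × ℝ`. -/
def doubleExtBracket {V : Type*} [AddCommGroup V] [Module ℝ V]
    (κ : V →ₗ[ℝ] V →ₗ[ℝ] ℝ) (D : V →ₗ[ℝ] V)
    (p q : ℝ × V × ℝ) : ℝ × V × ℝ :=
  (κ (D p.2.1) q.2.1, p.2.2 • D q.2.1 - q.2.2 • D p.2.1, 0)

/-- The Lorentzian form `κ_g` on the double extension `g(V,κ,D) = ℝ × V × ℝ`. -/
def doubleExtForm {V : Type*} [AddCommGroup V] [Module ℝ V]
    (κ : V →ₗ[ℝ] V →ₗ[ℝ] ℝ) (p q : ℝ × V × ℝ) : ℝ :=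
  p.1 * q.2.2 + q.1 * p.2.2 + κ p.2.1 q.2.1

/-
The form `κ_g` is symmetric, and brackets have vanishing last component, so `κ_g([a,b],c)` only
involves the `t`- and `V`-components. Rewriting `κ_g(b,[a,c])` as `κ_g([a,c],b)`, the terms
carrying `t_b` and `t_c` cancel pairwise and what is left is `t_a (κ(D x_b, x_c) + κ(D x_c, x_b))`, which vanishes because
`(x, y) ↦ κ(D x, y)` is antisymmetric when `κ` is symmetric and `D` is `κ`-skew.
-/

section DoubleExtension

variable {V : Type*} [AddCommGroup V] [Module ℝ V] (κ : V →ₗ[ℝ] V →ₗ[ℝ] ℝ)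

theorem doubleExtForm_comm (hsymm : ∀ x y : V, κ x y = κ y x) (p q : ℝ × V × ℝ) :
    doubleExtForm κ p q = doubleExtForm κ q p := by
  simp only [doubleExtForm, hsymm p.2.1]
  ring

theorem doubleExtForm_doubleExtBracket_left (D : V →ₗ[ℝ] V) (a b c : ℝ × V × ℝ) :
    doubleExtForm κ (doubleExtBracket κ D a b) c =
      c.2.2 * κ (D a.2.1) b.2.1 + a.2.2 * κ (D b.2.1) c.2.1 - b.2.2 * κ (D a.2.1) c.2.1 := by
  simp only [doubleExtForm, doubleExtBracket, map_sub, map_smul, LinearMap.sub_apply,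
    LinearMap.smul_apply, smul_eq_mul]
  ring

theorem apply_map_swap_eq_neg (hsymm : ∀ x y : V, κ x y = κ y x) (D : V →ₗ[ℝ] V)
    (hskew : ∀ x y : V, κ (D x) y = -κ x (D y)) (x y : V) :
    κ (D y) x = -κ (D x) y := by
  rw [hsymm, hskew, neg_neg]

end DoubleExtension

/-- For a symmetric bilinear form `κ` on a real vector space `V` and a
`κ`-skew-symmetric linear map `D`, the Lorentzian form `κ_g` on the double extension
`g(V,κ,D)` is invariant under the bracket: `κ_g([a,b],c) + κ_g(b,[a,c]) = 0`. -/
theorem doubleExtForm_invariant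
    {V : Type*} [AddCommGroup V] [Module ℝ V]
    (κ : V →ₗ[ℝ] V →ₗ[ℝ] ℝ) (hsymm : ∀ x y : V, κ x y = κ y x)
    (D : V →ₗ[ℝ] V) (hskew : ∀ x y : V, κ (D x) y = -κ x (D y)) :
    ∀ a b c : ℝ × V × ℝ,
      doubleExtForm κ (doubleExtBracket κ D a b) c
        + doubleExtForm κ b (doubleExtBracket κ D a c) = 0 := by
  intro a b c
  rw [doubleExtForm_comm κ hsymm b, doubleExtForm_doubleExtBracket_left,
    doubleExtForm_doubleExtBracket_left, apply_map_swap_eq_neg κ hsymm D hskew c.2.1]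
  ring
end

section
/- Let V be a real vector space, ω an alternating bilinear form on V, and D : V → V a linear map such that Q(v,w) := ω(Dv,w) is a symmetric positive definite bilinear form on V. Let α be a linear functional on V, x ∈ V, and z, t* ∈ ℝ, z*, t ∈ ℝ with t·z* > 0. Assume N := sup{ t·α(Dv) + z*·ω(x,v) : v ∈ V, Q(v,v) ≤ 1 } < ∞. Then inf_{v ∈ V} [ z*·z + α(x) − z*·ω(v,x) + t·t* + t·α(Dv) + (t·z*/2)·ω(Dv,v) ] = z*·z + α(x) + t·t* − N²/(2·t·z*). -/
/-!
Write `Q v = ω (D v) v` and `L v = t α(D v) + z* ω(x, v)`; since `ω` is alternating, the function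
to minimise is `const + L v + (c/2) Q v` with `c = t z* > 0`. As `Q` is positive definite, the
supremum `N` of `L` on the unit ball `Q ≤ 1` bounds `|L v|` by `N √(Q v)`, so completing the square
in `√(Q v)` gives the lower bound `-N²/(2c)`; it is approached along `-(N/c) u` for `u` in the unit
ball with `L u` close to `N`.
-/

open Set

namespace QuadraticMap

variable {V : Type*} [AddCommGroup V] [Module ℝ V] {Q : QuadraticForm ℝ V} {L : V →ₗ[ℝ] ℝ}
  {N c : ℝ}

theorem le_mul_sqrt_of_isLUB (hQ : Q.PosDef) (hN : IsLUB (L '' {v | Q v ≤ 1}) N) (w : V) :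
    L w ≤ N * √(Q w) := by
  rcases eq_or_ne w 0 with rfl | hw
  · simp
  have hq : 0 < √(Q w) := Real.sqrt_pos.2 (hQ w hw)
  have hunit : Q ((√(Q w))⁻¹ • w) ≤ 1 := by
    rw [QuadraticMap.map_smul, smul_eq_mul, ← mul_inv, Real.mul_self_sqrt (hQ.nonneg w),
      inv_mul_cancel₀ (hQ w hw).ne']
  have hle : (√(Q w))⁻¹ * L w ≤ N := by
    simpa using hN.1 (mem_image_of_mem L hunit)
  rwa [inv_mul_le_iff₀ hq, mul_comm] at hle

theorem neg_sq_div_le_add_half_mul (hQ : Q.PosDef) (hN : IsLUB (L '' {v | Q v ≤ 1}) N)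
    (hc : 0 < c) (v : V) : -(N ^ 2 / (2 * c)) ≤ L v + c / 2 * Q v := by
  have hneg : -L v ≤ N * √(Q v) := by
    simpa using le_mul_sqrt_of_isLUB hQ hN (-v)
  have hsq : √(Q v) ^ 2 = Q v := Real.sq_sqrt (hQ.nonneg v)
  have hsquare : -(N ^ 2 / (2 * c)) ≤ -(N * √(Q v)) + c / 2 * √(Q v) ^ 2 := by
    rw [neg_le, ← sub_nonneg]
    have : 0 ≤ (c * √(Q v) - N) ^ 2 / (2 * c) := by positivity
    convert this using 1
    field_simp
    ring
  rw [hsq] at hsquare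
  linarith

theorem add_half_mul_le_of_le_one (hc : 0 < c) {u : V} (hu : Q u ≤ 1) :
    L (-(N / c) • u) + c / 2 * Q (-(N / c) • u) ≤ -(N ^ 2 / (2 * c)) + N / c * (N - L u) := by
  have hQu : c / 2 * (N / c) ^ 2 * Q u ≤ c / 2 * (N / c) ^ 2 :=
    mul_le_of_le_one_right (by positivity) hu
  rw [map_smul, QuadraticMap.map_smul, smul_eq_mul, smul_eq_mul]
  calc -(N / c) * L u + c / 2 * ((-(N / c) * -(N / c)) * Q u)
      = -(N / c) * L u + c / 2 * (N / c) ^ 2 * Q u := by ring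
    _ ≤ -(N / c) * L u + c / 2 * (N / c) ^ 2 := by linarith
    _ = -(N ^ 2 / (2 * c)) + N / c * (N - L u) := by field_simp; ring

theorem isGLB_range_add_half_mul (hQ : Q.PosDef) (hN : IsLUB (L '' {v | Q v ≤ 1}) N)
    (hc : 0 < c) : IsGLB (range fun v => L v + c / 2 * Q v) (-(N ^ 2 / (2 * c))) := by
  refine ⟨forall_mem_range.2 (neg_sq_div_le_add_half_mul hQ hN hc), fun b hb => ?_⟩
  have hN0 : 0 ≤ N := by simpa using hN.1 (mem_image_of_mem L (by simp : Q 0 ≤ 1))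
  refine le_of_forall_pos_le_add fun ε hε => ?_
  obtain ⟨_, ⟨u, hu, rfl⟩, hLu, -⟩ :=
    hN.exists_between (sub_lt_self N (by positivity : 0 < ε / (N / c + 1)))
  have hgap : N / c * (N - L u) ≤ ε := calc
    N / c * (N - L u) ≤ N / c * (ε / (N / c + 1)) := by gcongr; linarith
    _ ≤ ε := by
      rw [mul_div_assoc', div_le_iff₀ (by positivity)]
      nlinarith
  have hbu := hb (mem_range_self (-(N / c) • u))
  linarith [add_half_mul_le_of_le_one (L := L) (N := N) hc hu]

end QuadraticMap

theorem isGLB_range_const_add {α ι : Type*} [AddCommGroup α] [PartialOrder α]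
    [IsOrderedAddMonoid α] {f : ι → α} {a : α} (h : IsGLB (range f) a) (c : α) :
    IsGLB (range fun i => c + f i) (c + a) := by
  simpa [← range_comp, Function.comp_def] using (OrderIso.addLeft c).isGLB_image'.2 h

theorem coadjoint_inf_formula_general
    {V : Type*} [AddCommGroup V] [Module ℝ V]
    (ω : V →ₗ[ℝ] V →ₗ[ℝ] ℝ) (halt : ∀ v : V, ω v v = 0)
    (D : V →ₗ[ℝ] V)
    (hQpos : ∀ v : V, v ≠ 0 → 0 < ω (D v) v)
    (α : V →ₗ[ℝ] ℝ) (x : V) (z tstar zstar t : ℝ) (htz : 0 < t * zstar)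
    (N : ℝ)
    (hN : IsLUB (Set.image (fun v : V => t * α (D v) + zstar * ω x v)
      {v : V | ω (D v) v ≤ 1}) N) :
    IsGLB (Set.range fun v : V =>
        zstar * z + α x - zstar * ω v x + t * tstar + t * α (D v)
          + (t * zstar / 2) * ω (D v) v)
      (zstar * z + α x + t * tstar - N ^ 2 / (2 * t * zstar)) := by
  set Q : QuadraticForm ℝ V := LinearMap.BilinMap.toQuadraticMap (ω ∘ₗ D)
  set L : V →ₗ[ℝ] ℝ := t • (α ∘ₗ D) + zstar • ω x
  have hQ : Q.PosDef := hQpos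
  refine (congrArg₂ IsGLB ?_ ?_).mp (isGLB_range_const_add
    (QuadraticMap.isGLB_range_add_half_mul (L := L) hQ hN htz) (zstar * z + α x + t * tstar))
  · congr 1
    funext v
    have hanti : ω v x = -ω x v := (LinearMap.IsAlt.neg halt x v).symm
    simp only [Q, L, LinearMap.add_apply, LinearMap.smul_apply, LinearMap.coe_comp,
      Function.comp_apply, smul_eq_mul, LinearMap.BilinMap.toQuadraticMap_apply, hanti, mul_neg,
      sub_neg_eq_add]
    ring
  · ring

/-- Infimum over the coadjoint direction: for `Q(v,w) := ω(Dv,w)` symmetric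
positive definite, `t·z* > 0`, and `N = sup { t·α(Dv) + z*·ω(x,v) : Q(v,v) ≤ 1 } < ∞`,
the infimum over `v ∈ V` of
`z*·z + α(x) - z*·ω(v,x) + t·t* + t·α(Dv) + (t·z*/2)·ω(Dv,v)`
equals `z*·z + α(x) + t·t* - N²/(2·t·z*)`. -/
theorem coadjoint_inf_formula
    {V : Type*} [AddCommGroup V] [Module ℝ V]
    (ω : V →ₗ[ℝ] V →ₗ[ℝ] ℝ) (halt : ∀ v : V, ω v v = 0)
    (D : V →ₗ[ℝ] V)
    (hQsymm : ∀ v w : V, ω (D v) w = ω (D w) v)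
    (hQpos : ∀ v : V, v ≠ 0 → 0 < ω (D v) v)
    (α : V →ₗ[ℝ] ℝ) (x : V) (z tstar zstar t : ℝ) (htz : 0 < t * zstar)
    (N : ℝ)
    (hN : IsLUB (Set.image (fun v : V => t * α (D v) + zstar * ω x v)
      {v : V | ω (D v) v ≤ 1}) N) :
    IsGLB (Set.range fun v : V =>
        zstar * z + α x - zstar * ω v x + t * tstar + t * α (D v)
          + (t * zstar / 2) * ω (D v) v)
      (zstar * z + α x + t * tstar - N ^ 2 / (2 * t * zstar)) :=
  coadjoint_inf_formula_general ω halt D hQpos α x z tstar zstar t htz N hN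
end
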